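/- arXiv:2309.03050 — 12 statements merged into one kernel-verified Lean document; each statement's English description precedes it below -/
import Mathlib

section
/- Let a = (a_i)_{i≥1} and b = (b_i)_{i≥1} be increasing real sequences such that a ∈ T_b (that is, b is convex with respect to a). Then T_a ⊆ T_b: every increasing sequence s = (s_i)_{i≥1} with respect to which a is convex is also a sequence with respect to which b is convex. -/
/-- If `a` and `b` are increasing sequences and `b` is convex with respect to `a`
(i.e. `a ∈ T_b`), then every increasing sequence `s` with respect to which `a` is
convex is also a sequence with respect to which `b` is convex, i.e. `T_a ⊆ T_b`. -/
theorem stmt_0 (a b : ℕ → ℝ) (ha : StrictMono a) (hb : StrictMono b)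
    (hab : Monotone (fun i => (b (i + 1) - b i) / (a (i + 1) - a i))) :
    ∀ s : ℕ → ℝ, StrictMono s →
      Monotone (fun i => (a (i + 1) - a i) / (s (i + 1) - s i)) →
      Monotone (fun i => (b (i + 1) - b i) / (s (i + 1) - s i)) := by
  intro s hs has
  have hda : ∀ i, 0 < a (i + 1) - a i := fun i => sub_pos.2 (ha (Nat.lt_succ_self i))
  have hdb : ∀ i, 0 < b (i + 1) - b i := fun i => sub_pos.2 (hb (Nat.lt_succ_self i))
  have hds : ∀ i, 0 < s (i + 1) - s i := fun i => sub_pos.2 (hs (Nat.lt_succ_self i))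
  have key : ∀ i, (b (i + 1) - b i) / (s (i + 1) - s i)
      = ((b (i + 1) - b i) / (a (i + 1) - a i)) * ((a (i + 1) - a i) / (s (i + 1) - s i)) := by
    intro i
    rw [div_mul_div_comm, mul_comm (b (i + 1) - b i), mul_div_mul_left _ _ (hda i).ne']
  intro i j hij
  simp only [key]
  exact mul_le_mul (hab hij) (has hij) (le_of_lt (div_pos (hda i) (hds i)))
    (le_of_lt (div_pos (hdb j) (hda j)))
end

section
/- A real sequence a = (a_i)_{i≥1} is relative convex (i.e., there exists an increasing real sequence t = (t_i)_{i≥1} with respect to which a is convex) if and only if a is strictly V-shaped, that is, the sequence i ↦ sign(a_{i+1} − a_i) (taking values −1, 0, 1) is non-decreasing in i; equivalently, a consists of a (possibly empty) strictly decreasing initial segment, followed by a (possibly empty) constant segment, followed by a (possibly empty) strictly increasing final segment. -/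
lemma sign_mono_aux {x y : ℝ} (h : x ≤ y) : Real.sign x ≤ Real.sign y := by
  rcases lt_trichotomy x 0 with hx | hx | hx
  · rw [Real.sign_of_neg hx]
    rcases lt_trichotomy y 0 with hy | hy | hy
    · rw [Real.sign_of_neg hy]
    · simp [hy]
    · rw [Real.sign_of_pos hy]; norm_num
  · subst hx
    rw [Real.sign_zero]
    rcases eq_or_lt_of_le h with hy | hy
    · simp [← hy]
    · rw [Real.sign_of_pos hy]; norm_num
  · rw [Real.sign_of_pos hx, Real.sign_of_pos (lt_of_lt_of_le hx h)]

/-- A real sequence is relative convex (convex with respect to some increasing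
sequence) iff it is strictly V-shaped, i.e. the sequence of signs of its successive
differences is non-decreasing. -/
theorem stmt_3 (a : ℕ → ℝ) :
    (∃ t : ℕ → ℝ, StrictMono t ∧
      Monotone (fun i => (a (i + 1) - a i) / (t (i + 1) - t i))) ↔
    Monotone (fun i => Real.sign (a (i + 1) - a i)) := by
  constructor
  · rintro ⟨t, ht, hm⟩
    have key : ∀ k, Real.sign (a (k + 1) - a k) =
        Real.sign ((a (k + 1) - a k) / (t (k + 1) - t k)) := by
      intro k
      have hp : 0 < t (k + 1) - t k := sub_pos.2 (ht (Nat.lt_succ_self k))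
      rcases lt_trichotomy (a (k + 1) - a k) 0 with h | h | h
      · rw [Real.sign_of_neg h, Real.sign_of_neg (div_neg_of_neg_of_pos h hp)]
      · rw [h]; simp
      · rw [Real.sign_of_pos h, Real.sign_of_pos (div_pos h hp)]
    intro i j hij
    simp only [key i, key j]
    exact sign_mono_aux (hm hij)
  · intro hs
    set c : ℕ → ℝ := fun j => if a (j + 1) - a j = 0 then 1 else |a (j + 1) - a j| with hc
    have hcpos : ∀ j, 0 < c j := by
      intro j
      by_cases h : a (j + 1) - a j = 0 <;> simp [hc, h, abs_pos]
    refine ⟨fun i => ∑ j ∈ Finset.range i, c j, ?_, ?_⟩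
    · apply strictMono_nat_of_lt_succ
      intro n
      rw [Finset.sum_range_succ]
      exact lt_add_of_pos_right _ (hcpos n)
    · have key : ∀ k, (a (k + 1) - a k) /
          ((∑ j ∈ Finset.range (k + 1), c j) - ∑ j ∈ Finset.range k, c j) =
          Real.sign (a (k + 1) - a k) := by
        intro k
        rw [Finset.sum_range_succ, add_sub_cancel_left]
        rcases lt_trichotomy (a (k + 1) - a k) 0 with h | h | h
        · rw [Real.sign_of_neg h]
          have : c k = -(a (k + 1) - a k) := by
            simp [hc, ne_of_lt h, abs_of_neg h]
          rw [this, div_neg, div_self (ne_of_lt h)]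
        · simp [h]
        · rw [Real.sign_of_pos h]
          have : c k = a (k + 1) - a k := by
            simp [hc, ne_of_gt h, abs_of_pos h]
          rw [this, div_self (ne_of_gt h)]
      intro i j hij
      simp only [key i, key j]
      exact hs hij
end

section
/- Let n ≥ 2 and let (a_i)_{i=1}^n be a finite strictly V-shaped real sequence, i.e., the finite sequence i ↦ sign(a_{i+1} − a_i), 1 ≤ i ≤ n−1, is non-decreasing. Then for any real numbers α < β there exists a strictly increasing finite sequence (t_i)_{i=1}^n with t_1 = α and t_n = β such that (a_i)_{i=1}^n is convex with respect to (t_i)_{i=1}^n, i.e., the finite sequence (Δa_i / Δt_i)_{i=1}^{n−1} is non-decreasing. -/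
/-- A finite strictly V-shaped sequence `(a_i)_{i=1}^n` is convex with respect to a
subdivision `(t_i)_{i=1}^n` of any interval `[α, β]`. -/
theorem stmt_4 (n : ℕ) (hn : 2 ≤ n) (a : ℕ → ℝ)
    (hV : ∀ i, 1 ≤ i → i + 2 ≤ n →
      Real.sign (a (i + 1) - a i) ≤ Real.sign (a (i + 2) - a (i + 1))) :
    ∀ α β : ℝ, α < β →
      ∃ t : ℕ → ℝ, t 1 = α ∧ t n = β ∧
        (∀ i, 1 ≤ i → i < n → t i < t (i + 1)) ∧
        (∀ i, 1 ≤ i → i + 2 ≤ n →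
          (a (i + 1) - a i) / (t (i + 1) - t i) ≤
            (a (i + 2) - a (i + 1)) / (t (i + 2) - t (i + 1))) := by
  intro α β hab
  set D : ℕ → ℝ := fun i =>
    if a (i + 1) - a i < 0 then (a i - a (i + 1)) * 2 ^ i
    else if a (i + 1) - a i = 0 then 1
    else (a (i + 1) - a i) * (1 / 2 : ℝ) ^ i with hDdef
  have hD : ∀ i, 0 < D i := by
    intro i
    simp only [hDdef]
    split_ifs with h1 h2
    · have : 0 < a i - a (i + 1) := by linarith
      positivity
    · norm_num
    · have : 0 < a (i + 1) - a i := lt_of_le_of_ne (not_lt.mp h1) (Ne.symm h2)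
      positivity
  have hslope : ∀ i, (a (i + 1) - a i) / D i =
      if a (i + 1) - a i < 0 then -((1 / 2 : ℝ) ^ i)
      else if a (i + 1) - a i = 0 then 0
      else 2 ^ i := by
    intro i
    simp only [hDdef]
    split_ifs with h1 h2
    · have hne : a i - a (i + 1) ≠ 0 := by intro h; nlinarith
      have h2i : (2 : ℝ) ^ i ≠ 0 := by positivity
      field_simp
      have h12 : (1 / 2 : ℝ) ^ i * 2 ^ i = 1 := by rw [← mul_pow]; norm_num
      linear_combination (-(a (i + 1) - a i)) * h12
    · simp [h2]
    · have hpos : 0 < a (i + 1) - a i := lt_of_le_of_ne (not_lt.mp h1) (Ne.symm h2)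
      have hne : a (i + 1) - a i ≠ 0 := ne_of_gt hpos
      have h2i : ((1 / 2 : ℝ)) ^ i ≠ 0 := by positivity
      field_simp
      rw [← mul_pow]; norm_num
  have hmono : ∀ i, 1 ≤ i → i + 2 ≤ n →
      (a (i + 1) - a i) / D i ≤ (a (i + 2) - a (i + 1)) / D (i + 1) := by
    intro i h1 h2
    have hs := hV i h1 h2
    have he : i + 1 + 1 = i + 2 := rfl
    rw [hslope i]
    have := hslope (i + 1)
    rw [he] at this
    rw [this]
    have hhalf : ((1 / 2 : ℝ)) ^ (i + 1) ≤ (1 / 2 : ℝ) ^ i :=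
      pow_le_pow_of_le_one (by norm_num) (by norm_num) (Nat.le_succ i)
    have hp1 : (0 : ℝ) < (1 / 2 : ℝ) ^ i := by positivity
    have hp2 : (0 : ℝ) < (2 : ℝ) ^ i := by positivity
    have hp3 : (2 : ℝ) ^ i ≤ 2 ^ (i + 1) :=
      pow_le_pow_right₀ (by norm_num) (Nat.le_succ i)
    rcases lt_trichotomy (a (i + 1) - a i) 0 with hA | hA | hA
    · rcases lt_trichotomy (a (i + 2) - a (i + 1)) 0 with hB | hB | hB
      · rw [if_pos hA, if_pos hB]; linarith
      · rw [if_pos hA, if_neg (by rw [hB]; exact lt_irrefl 0), if_pos hB]; linarith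
      · rw [if_pos hA, if_neg (not_lt.mpr hB.le), if_neg (ne_of_gt hB)]
        have : (0:ℝ) < 2 ^ (i + 1) := by positivity
        linarith
    · rcases lt_trichotomy (a (i + 2) - a (i + 1)) 0 with hB | hB | hB
      · exfalso
        rw [hA, Real.sign_zero, Real.sign_of_neg hB] at hs; linarith
      · rw [if_neg (by rw [hA]; exact lt_irrefl 0), if_pos hA,
          if_neg (by rw [hB]; exact lt_irrefl 0), if_pos hB]
      · rw [if_neg (by rw [hA]; exact lt_irrefl 0), if_pos hA,
          if_neg (not_lt.mpr hB.le), if_neg (ne_of_gt hB)]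
        positivity
    · have hA0 : ¬ (a (i + 1) - a i < 0) := not_lt.mpr hA.le
      rcases lt_trichotomy (a (i + 2) - a (i + 1)) 0 with hB | hB | hB
      · exfalso
        rw [Real.sign_of_pos hA, Real.sign_of_neg hB] at hs; linarith
      · exfalso
        rw [Real.sign_of_pos hA, hB, Real.sign_zero] at hs; linarith
      · rw [if_neg hA0, if_neg (ne_of_gt hA),
          if_neg (not_lt.mpr hB.le), if_neg (ne_of_gt hB)]
        exact hp3
  set S : ℕ → ℝ := fun i => ∑ j ∈ Finset.Ico 1 i, D j with hSdef
  have hSn : 0 < S n := by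
    apply Finset.sum_pos (fun j _ => hD j)
    exact ⟨1, by simp; omega⟩
  set c : ℝ := (β - α) / S n with hcdef
  have hc : 0 < c := div_pos (by linarith) hSn
  refine ⟨fun i => α + c * S i, ?_, ?_, ?_, ?_⟩
  · simp [hSdef]
  · simp only [hcdef]
    field_simp
    ring
  · intro i hi _
    have hstep : S (i + 1) = S i + D i := by
      simp only [hSdef]
      rw [Finset.sum_Ico_succ_top hi]
    have := mul_pos hc (hD i)
    simp only []
    rw [hstep]
    nlinarith
  · intro i h1 h2
    have hstep : ∀ j, 1 ≤ j → (α + c * S (j + 1)) - (α + c * S j) = c * D j := by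
      intro j hj
      have : S (j + 1) = S j + D j := by
        simp only [hSdef]
        rw [Finset.sum_Ico_succ_top hj]
      rw [this]; ring
    rw [hstep i h1, show i + 2 = (i + 1) + 1 from rfl, hstep (i + 1) (by omega)]
    have key := hmono i h1 h2
    rw [mul_comm c (D i), mul_comm c (D (i + 1)), ← div_div, ← div_div]
    exact div_le_div_of_nonneg_right key hc.le
end

section
/- The class of relative convex sequences is not closed under addition: there exist real sequences a = (a_i)_{i≥1} and b = (b_i)_{i≥1}, each relative convex (i.e., each convex with respect to some increasing sequence), such that the sequence (a_i + b_i)_{i≥1} is not relative convex. For instance, a_i = √|i − 3| and b_i = √|i − 9| are relative convex but their sum is not. -/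
private noncomputable def T (n : ℕ) : ℕ → ℝ :=
  fun i => if i ≤ n then -Real.sqrt ((n : ℝ) - i) else Real.sqrt ((i : ℝ) - n)

private lemma T_le {n i : ℕ} (h : i ≤ n) : T n i = -Real.sqrt ((n : ℝ) - i) := by
  simp [T, h]

private lemma T_ge {n i : ℕ} (h : n ≤ i) : T n i = Real.sqrt ((i : ℝ) - n) := by
  by_cases h2 : i ≤ n
  · have : i = n := le_antisymm h2 h
    subst this
    simp [T]
  · simp [T, h2]

private lemma aux_sqrt (n : ℕ) :
    ∃ t : ℕ → ℝ, StrictMono t ∧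
      Monotone (fun i : ℕ =>
        (Real.sqrt |((i + 1 : ℕ) : ℝ) - (n : ℝ)| - Real.sqrt |((i : ℕ) : ℝ) - (n : ℝ)|)
          / (t (i + 1) - t i)) := by
  refine ⟨T n, ?_, ?_⟩
  · apply strictMono_nat_of_lt_succ
    intro i
    by_cases h1 : i + 1 ≤ n
    · rw [T_le h1, T_le (by omega : i ≤ n)]
      have hc : ((i : ℝ) + 1) ≤ n := by exact_mod_cast h1
      push_cast
      have : Real.sqrt ((n : ℝ) - (i + 1)) < Real.sqrt ((n : ℝ) - i) :=
        Real.sqrt_lt_sqrt (by linarith) (by linarith)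
      linarith
    · have h0 : n ≤ i := by omega
      rw [T_ge (by omega : n ≤ i + 1), T_ge h0]
      have hc : (n : ℝ) ≤ i := by exact_mod_cast h0
      push_cast
      exact Real.sqrt_lt_sqrt (by linarith) (by linarith)
  · have hfun : (fun i : ℕ =>
        (Real.sqrt |((i + 1 : ℕ) : ℝ) - (n : ℝ)| - Real.sqrt |((i : ℕ) : ℝ) - (n : ℝ)|)
          / (T n (i + 1) - T n i))
        = fun i : ℕ => if i + 1 ≤ n then (-1 : ℝ) else 1 := by
      funext i
      by_cases h1 : i + 1 ≤ n
      · simp only [h1, if_pos]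
        rw [T_le h1, T_le (by omega : i ≤ n)]
        have hc : ((i : ℝ) + 1) ≤ n := by exact_mod_cast h1
        push_cast
        rw [abs_of_nonpos (by linarith : (i : ℝ) + 1 - n ≤ 0),
          abs_of_nonpos (by linarith : (i : ℝ) - n ≤ 0)]
        set A := Real.sqrt (-((i : ℝ) + 1 - n)) with hA
        set B := Real.sqrt (-((i : ℝ) - n)) with hB
        have hAB : A < B := Real.sqrt_lt_sqrt (by linarith) (by linarith)
        have h1' : -((n:ℝ) - ((i:ℝ) + 1)) = (i:ℝ) + 1 - n := by ring
        have h2' : -((n:ℝ) - (i:ℝ)) = (i:ℝ) - n := by ring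
        have e1 : Real.sqrt ((n:ℝ) - ((i:ℝ) + 1)) = A := by rw [hA]; congr 1; ring
        have e2 : Real.sqrt ((n:ℝ) - (i:ℝ)) = B := by rw [hB]; congr 1; ring
        rw [e1, e2]
        have hne : -A - -B ≠ 0 := by intro h; linarith
        rw [div_eq_iff hne]; ring
      · simp only [h1, if_neg, not_false_iff]
        have h0 : n ≤ i := by omega
        rw [T_ge (by omega : n ≤ i + 1), T_ge h0]
        have hc : (n : ℝ) ≤ i := by exact_mod_cast h0
        push_cast
        rw [abs_of_nonneg (by linarith : (0:ℝ) ≤ (i : ℝ) + 1 - n),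
          abs_of_nonneg (by linarith : (0:ℝ) ≤ (i : ℝ) - n)]
        have hAB : Real.sqrt ((i : ℝ) - n) < Real.sqrt ((i : ℝ) + 1 - n) :=
          Real.sqrt_lt_sqrt (by linarith) (by linarith)
        rw [div_self (by intro h; apply absurd h; intro h'; linarith [sub_eq_zero.mp h'] : Real.sqrt ((i:ℝ) + 1 - n) - Real.sqrt ((i:ℝ) - n) ≠ 0)]
    rw [hfun]
    intro i j hij
    dsimp only
    split_ifs with hi hj hj
    · exact le_refl _
    · norm_num
    · exact absurd (by omega : j + 1 ≤ n) (by omega)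
    · exact le_refl _

/-- The class of relative convex sequences is not closed under addition: the
sequences `√|i - 3|` and `√|i - 9|` are relative convex, but their sum is not. -/
theorem stmt_5 :
    ∃ a b : ℕ → ℝ,
      (a = fun i : ℕ => Real.sqrt |(i : ℝ) - 3|) ∧
      (b = fun i : ℕ => Real.sqrt |(i : ℝ) - 9|) ∧
      (∃ t : ℕ → ℝ, StrictMono t ∧
        Monotone (fun i => (a (i + 1) - a i) / (t (i + 1) - t i))) ∧
      (∃ t : ℕ → ℝ, StrictMono t ∧
        Monotone (fun i => (b (i + 1) - b i) / (t (i + 1) - t i))) ∧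
      ¬ (∃ t : ℕ → ℝ, StrictMono t ∧
        Monotone (fun i =>
          ((a (i + 1) + b (i + 1)) - (a i + b i)) / (t (i + 1) - t i))) := by
  refine ⟨_, _, rfl, rfl, ?_, ?_, ?_⟩
  · obtain ⟨t, ht, hm⟩ := aux_sqrt 3
    refine ⟨t, ht, ?_⟩
    convert hm using 3
    norm_num
  · obtain ⟨t, ht, hm⟩ := aux_sqrt 9
    refine ⟨t, ht, ?_⟩
    convert hm using 3
    norm_num
  · rintro ⟨t, ht, hm⟩
    have h36 := hm (show (3:ℕ) ≤ 6 by norm_num)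
    dsimp only at h36
    have hd3 : (0:ℝ) < t (3+1) - t 3 := sub_pos.mpr (ht (by omega))
    have hd6 : (0:ℝ) < t (6+1) - t 6 := sub_pos.mpr (ht (by omega))
    have e3 : (Real.sqrt |((3+1:ℕ):ℝ) - 3| + Real.sqrt |((3+1:ℕ):ℝ) - 9|)
        - (Real.sqrt |((3:ℕ):ℝ) - 3| + Real.sqrt |((3:ℕ):ℝ) - 9|)
        = 1 + Real.sqrt 5 - Real.sqrt 6 := by
      rw [show |((3+1:ℕ):ℝ) - 3| = 1 by rw [show ((3+1:ℕ):ℝ) - 3 = 1 by norm_num]; norm_num,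
        show |((3+1:ℕ):ℝ) - 9| = 5 by rw [show ((3+1:ℕ):ℝ) - 9 = -5 by norm_num]; norm_num,
        show |((3:ℕ):ℝ) - 3| = 0 by rw [show ((3:ℕ):ℝ) - 3 = 0 by norm_num]; norm_num,
        show |((3:ℕ):ℝ) - 9| = 6 by rw [show ((3:ℕ):ℝ) - 9 = -6 by norm_num]; norm_num,
        Real.sqrt_one, Real.sqrt_zero]
      ring
    have e6 : (Real.sqrt |((6+1:ℕ):ℝ) - 3| + Real.sqrt |((6+1:ℕ):ℝ) - 9|)
        - (Real.sqrt |((6:ℕ):ℝ) - 3| + Real.sqrt |((6:ℕ):ℝ) - 9|)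
        = 2 + Real.sqrt 2 - 2 * Real.sqrt 3 := by
      rw [show |((6+1:ℕ):ℝ) - 3| = 4 by rw [show ((6+1:ℕ):ℝ) - 3 = 4 by norm_num]; norm_num,
        show |((6+1:ℕ):ℝ) - 9| = 2 by rw [show ((6+1:ℕ):ℝ) - 9 = -2 by norm_num]; norm_num,
        show |((6:ℕ):ℝ) - 3| = 3 by rw [show ((6:ℕ):ℝ) - 3 = 3 by norm_num]; norm_num,
        show |((6:ℕ):ℝ) - 9| = 3 by rw [show ((6:ℕ):ℝ) - 9 = -3 by norm_num]; norm_num,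
        show (4:ℝ) = 2^2 by norm_num, Real.sqrt_sq (by norm_num : (0:ℝ) ≤ 2)]
      ring
    have pos3 : 0 < 1 + Real.sqrt 5 - Real.sqrt 6 := by
      have h5 : (2:ℝ) ≤ Real.sqrt 5 := by
        rw [show (2:ℝ) = Real.sqrt 4 by
          rw [show (4:ℝ) = 2^2 by norm_num, Real.sqrt_sq (by norm_num : (0:ℝ) ≤ 2)]]
        exact Real.sqrt_le_sqrt (by norm_num)
      have h6 : Real.sqrt 6 < 3 := by
        rw [show (3:ℝ) = Real.sqrt 9 by
          rw [show (9:ℝ) = 3^2 by norm_num, Real.sqrt_sq (by norm_num : (0:ℝ) ≤ 3)]]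
        exact Real.sqrt_lt_sqrt (by norm_num) (by norm_num)
      linarith
    have neg6 : 2 + Real.sqrt 2 - 2 * Real.sqrt 3 < 0 := by
      nlinarith [Real.sq_sqrt (show (0:ℝ) ≤ 2 by norm_num),
        Real.sq_sqrt (show (0:ℝ) ≤ 3 by norm_num),
        Real.sqrt_nonneg 2, Real.sqrt_nonneg 3,
        Real.sqrt_lt_sqrt (show (0:ℝ) ≤ 2 by norm_num) (show (2:ℝ) < 3 by norm_num)]
    have hpos : 0 < (Real.sqrt |((3+1:ℕ):ℝ) - 3| + Real.sqrt |((3+1:ℕ):ℝ) - 9|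
        - (Real.sqrt |((3:ℕ):ℝ) - 3| + Real.sqrt |((3:ℕ):ℝ) - 9|)) / (t (3+1) - t 3) := by
      rw [e3]; exact div_pos pos3 hd3
    have hneg : (Real.sqrt |((6+1:ℕ):ℝ) - 3| + Real.sqrt |((6+1:ℕ):ℝ) - 9|
        - (Real.sqrt |((6:ℕ):ℝ) - 3| + Real.sqrt |((6:ℕ):ℝ) - 9|)) / (t (6+1) - t 6) < 0 := by
      rw [e6]; exact div_neg_of_neg_of_pos neg6 hd6
    linarith [h36, hpos, hneg]
end

section
/- Let I ⊆ ℝ be an interval, let ψ : I → ℝ be a non-decreasing convex function, and let a = (a_i)_{i≥1} be a real sequence with a_i ∈ I for all i. Then T_a ⊆ T_{ψ(a)}: every increasing sequence t with respect to which a is convex is also a sequence with respect to which the sequence (ψ(a_i))_{i≥1} is convex. -/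
/-- If `ψ` is a non-decreasing convex function on an interval `I` and `a` takes
values in `I`, then `T_a ⊆ T_{ψ(a)}`. -/
theorem stmt_8 (I : Set ℝ) (hI : Convex ℝ I) (ψ : ℝ → ℝ)
    (hψmono : MonotoneOn ψ I) (hψconv : ConvexOn ℝ I ψ)
    (a : ℕ → ℝ) (haI : ∀ i, a i ∈ I) :
    ∀ t : ℕ → ℝ, StrictMono t →
      Monotone (fun i => (a (i + 1) - a i) / (t (i + 1) - t i)) →
      Monotone (fun i => (ψ (a (i + 1)) - ψ (a i)) / (t (i + 1) - t i)) := by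
  intro t ht hmono
  have key : ∀ p q r : ℝ, p ∈ I → q ∈ I → r ∈ I → ∀ s u : ℝ, 0 < s → 0 < u →
      (q - p) / s ≤ (r - q) / u → (ψ q - ψ p) / s ≤ (ψ r - ψ q) / u := by
    intro p q r hp hq hr s u hs hu h
    rcases lt_trichotomy p q with hpq | hpq | hpq
    · -- p < q, hence q < r
      have h1 : 0 < (q - p) / s := div_pos (by linarith) hs
      have h2 : 0 < (r - q) / u := lt_of_lt_of_le h1 h
      have hqr : q < r := by
        have := (lt_div_iff₀ hu).mp h2
        linarith
      have hS : (ψ q - ψ p) / (q - p) ≤ (ψ r - ψ q) / (r - q) :=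
        hψconv.slope_mono_adjacent hp hr hpq hqr
      have h0 : 0 ≤ (ψ q - ψ p) / (q - p) :=
        div_nonneg (sub_nonneg.mpr (hψmono hp hq hpq.le)) (by linarith)
      have hne : q - p ≠ 0 := by linarith
      have hne2 : r - q ≠ 0 := by linarith
      have e1 : (ψ q - ψ p) / s = ((ψ q - ψ p) / (q - p)) * ((q - p) / s) := by
        field_simp
      have e2 : (ψ r - ψ q) / u = ((ψ r - ψ q) / (r - q)) * ((r - q) / u) := by
        field_simp
      rw [e1, e2]
      exact mul_le_mul hS h h1.le (le_trans h0 hS)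
    · subst hpq
      have h0 : (0:ℝ) ≤ (r - p) / u := by
        have : p - p = 0 := by ring
        simpa [this] using h
      have hpr : p ≤ r := by
        by_contra hc
        push_neg at hc
        have : (r - p) / u < 0 := div_neg_of_neg_of_pos (by linarith) hu
        linarith
      have : 0 ≤ (ψ r - ψ p) / u :=
        div_nonneg (sub_nonneg.mpr (hψmono hp hr hpr)) hu.le
      simpa using this
    · -- q < p
      by_cases hqr : q ≤ r
      · have hl : (ψ q - ψ p) / s ≤ 0 :=
          div_nonpos_of_nonpos_of_nonneg
            (sub_nonpos.mpr (hψmono hq hp hpq.le)) hs.le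
        have hrr : 0 ≤ (ψ r - ψ q) / u :=
          div_nonneg (sub_nonneg.mpr (hψmono hq hr hqr)) hu.le
        linarith
      · push_neg at hqr
        have hS : (ψ q - ψ r) / (q - r) ≤ (ψ p - ψ q) / (p - q) :=
          hψconv.slope_mono_adjacent hr hp hqr hpq
        have h0 : 0 ≤ (ψ q - ψ r) / (q - r) :=
          div_nonneg (sub_nonneg.mpr (hψmono hr hq hqr.le)) (by linarith)
        have h' : (q - r) / u ≤ (p - q) / s := by
          have e1 : (q - p) / s = -((p - q) / s) := by ring
          have e2 : (r - q) / u = -((q - r) / u) := by ring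
          rw [e1, e2] at h
          linarith
        have h1 : 0 ≤ (q - r) / u := div_nonneg (by linarith) hu.le
        have e1 : (ψ q - ψ r) / u = ((ψ q - ψ r) / (q - r)) * ((q - r) / u) := by
          have : q - r ≠ 0 := by linarith
          field_simp
        have e2 : (ψ p - ψ q) / s = ((ψ p - ψ q) / (p - q)) * ((p - q) / s) := by
          have : p - q ≠ 0 := by linarith
          field_simp
        have key2 : (ψ q - ψ r) / u ≤ (ψ p - ψ q) / s := by
          rw [e1, e2]
          exact mul_le_mul hS h' h1 (le_trans h0 hS)
        have e3 : (ψ q - ψ p) / s = -((ψ p - ψ q) / s) := by ring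
        have e4 : (ψ r - ψ q) / u = -((ψ q - ψ r) / u) := by ring
        rw [e3, e4]
        linarith
  apply monotone_nat_of_le_succ
  intro i
  exact key (a i) (a (i + 1)) (a (i + 2)) (haI i) (haI (i + 1)) (haI (i + 2))
    (t (i + 1) - t i) (t (i + 2) - t (i + 1))
    (sub_pos.mpr (ht (Nat.lt_succ_self i)))
    (sub_pos.mpr (ht (Nat.lt_succ_self (i + 1))))
    (hmono (Nat.le_succ i))
end

section
/- Let a = (a_n)_{n≥1} be a bounded real sequence and let t = (t_n)_{n≥1} be an increasing sequence with respect to which a is convex, satisfying liminf_{n→∞} Δt_n > 0. Then n · (Δa_n / Δt_n) → 0 as n → ∞. -/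
/-- If `a` is bounded and convex with respect to an increasing sequence `t` with
`liminf Δt_n > 0`, then `n · (Δa_n / Δt_n) → 0`. -/
theorem stmt_12 (a t : ℕ → ℝ) (hb : ∃ M : ℝ, ∀ n, |a n| ≤ M)
    (ht : StrictMono t)
    (hat : Monotone (fun i => (a (i + 1) - a i) / (t (i + 1) - t i)))
    (hliminf : ∃ α > (0 : ℝ), ∀ᶠ n in Filter.atTop, α ≤ t (n + 1) - t n) :
    Filter.Tendsto (fun n : ℕ => (n : ℝ) * ((a (n + 1) - a n) / (t (n + 1) - t n)))
      Filter.atTop (nhds 0) := by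
  obtain ⟨M, hM⟩ := hb
  obtain ⟨α, hα, hev⟩ := hliminf
  obtain ⟨N, hN⟩ := Filter.eventually_atTop.1 hev
  set d : ℕ → ℝ := fun i => (a (i + 1) - a i) / (t (i + 1) - t i) with hd
  have htpos : ∀ i, (0:ℝ) < t (i + 1) - t i := fun i => sub_pos.2 (ht (Nat.lt_succ_self i))
  have hΔ : ∀ i, a (i + 1) - a i = d i * (t (i + 1) - t i) := fun i =>
    (div_mul_cancel₀ _ (htpos i).ne').symm
  -- telescoping sum
  have htel : ∀ m n : ℕ, m ≤ n →
      (∑ i ∈ Finset.Ico m n, d i * (t (i + 1) - t i)) = a n - a m := by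
    intro m n h
    have : ∀ k : ℕ, (∑ i ∈ Finset.range k, d i * (t (i + 1) - t i)) = a k - a 0 := by
      intro k
      rw [← Finset.sum_range_sub a k]
      exact Finset.sum_congr rfl fun i _ => (hΔ i).symm
    rw [Finset.sum_Ico_eq_sub _ h, this, this]
    ring
  -- a converges
  have hconv : ∃ c, Filter.Tendsto a Filter.atTop (nhds c) := by
    by_cases h : ∀ n, d n < 0
    · have hanti : Antitone a := by
        apply antitone_nat_of_succ_le
        intro n
        have := mul_neg_of_neg_of_pos (h n) (htpos n)
        nlinarith [hΔ n]
      refine ⟨_, tendsto_atTop_ciInf hanti ⟨-M, ?_⟩⟩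
      rintro x ⟨n, rfl⟩
      linarith [abs_le.1 (hM n)]
    · push_neg at h
      obtain ⟨N₀, hN₀⟩ := h
      have hmono : Monotone fun n => a (n + N₀) := by
        apply monotone_nat_of_le_succ
        intro n
        have hdn : 0 ≤ d (n + N₀) := le_trans hN₀ (hat (by omega))
        have h0 := mul_nonneg hdn (htpos (n + N₀)).le
        have he : n + 1 + N₀ = (n + N₀) + 1 := by omega
        rw [he]
        nlinarith [hΔ (n + N₀)]
      refine ⟨_, (Filter.tendsto_add_atTop_iff_nat N₀).1
        (tendsto_atTop_ciSup hmono ⟨M, ?_⟩)⟩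
      rintro x ⟨n, rfl⟩
      exact (abs_le.1 (hM (n + N₀))).2
  obtain ⟨c, hc⟩ := hconv
  -- limits of a(2n) - a(n) and a(n) - a(n/2)
  have h2n : Filter.Tendsto (fun n : ℕ => 2 * n) Filter.atTop Filter.atTop :=
    Filter.tendsto_atTop_atTop.2 fun b => ⟨b, fun n hn => by omega⟩
  have hhalf : Filter.Tendsto (fun n : ℕ => n / 2) Filter.atTop Filter.atTop :=
    Filter.tendsto_atTop_atTop.2 fun b => ⟨2 * b, fun n hn => by omega⟩
  have hU : Filter.Tendsto (fun n : ℕ => (a (2 * n) - a n) / α) Filter.atTop (nhds 0) := by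
    have := ((hc.comp h2n).sub hc).div_const α
    simpa using this
  have hL : Filter.Tendsto (fun n : ℕ => 2 * (a n - a (n / 2)) / α) Filter.atTop (nhds 0) := by
    have := ((hc.sub (hc.comp hhalf)).const_mul 2).div_const α
    simpa using this
  -- squeeze
  have hUmax : Filter.Tendsto (fun n : ℕ => max 0 ((a (2 * n) - a n) / α))
      Filter.atTop (nhds 0) := by
    have := (tendsto_const_nhds : Filter.Tendsto (fun _ : ℕ => (0:ℝ)) Filter.atTop (nhds 0)).max hU
    simpa using this
  have hLmin : Filter.Tendsto (fun n : ℕ => min 0 (2 * (a n - a (n / 2)) / α))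
      Filter.atTop (nhds 0) := by
    have := (tendsto_const_nhds : Filter.Tendsto (fun _ : ℕ => (0:ℝ)) Filter.atTop (nhds 0)).min hL
    simpa using this
  apply tendsto_of_tendsto_of_tendsto_of_le_of_le' hLmin hUmax
  · -- lower bound
    filter_upwards [Filter.eventually_atTop.2 ⟨2 * N + 2, fun n hn => hn⟩] with n hn
    rcases le_or_gt 0 (d n) with hdn | hdn
    · exact le_trans (min_le_left _ _) (mul_nonneg (Nat.cast_nonneg n) hdn)
    · refine le_trans (min_le_right _ _) ?_
      set m := n / 2 with hm
      have hmn : m ≤ n := Nat.div_le_self n 2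
      have hNm : N ≤ m := by omega
      -- a n - a m ≤ (n - m) * α * d n
      have hsum : a n - a m ≤ ((n - m : ℕ) : ℝ) * (α * d n) := by
        rw [← htel m n hmn]
        calc (∑ i ∈ Finset.Ico m n, d i * (t (i + 1) - t i))
            ≤ ∑ i ∈ Finset.Ico m n, α * d n := by
              apply Finset.sum_le_sum
              intro i hi
              obtain ⟨hi1, hi2⟩ := Finset.mem_Ico.1 hi
              have hdi : d i ≤ d n := hat (le_of_lt hi2)
              have hdi0 : d i ≤ 0 := le_trans hdi hdn.le
              have h1 : d i * (t (i + 1) - t i) ≤ d i * α :=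
                mul_le_mul_of_nonpos_left (hN i (by omega)) hdi0
              nlinarith
          _ = ((n - m : ℕ) : ℝ) * (α * d n) := by
              rw [Finset.sum_const, Nat.card_Ico]; simp [mul_comm]
      have hcast : ((n - m : ℕ) : ℝ) = (n : ℝ) - (m : ℝ) := by
        push_cast [Nat.cast_sub hmn]; ring
      have hk2 : (n : ℝ) ≤ 2 * ((n : ℝ) - (m : ℝ)) := by
        have : n ≤ 2 * (n - m) := by omega
        have := (Nat.cast_le (α := ℝ)).2 this
        push_cast [Nat.cast_sub hmn] at this
        linarith
      have h1 : 2 * (a n - a m) / α ≤ 2 * (((n:ℝ) - m) * d n) := by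
        rw [div_le_iff₀ hα]
        rw [hcast] at hsum
        nlinarith
      have h2 : 2 * (((n:ℝ) - m) * d n) ≤ (n : ℝ) * d n := by nlinarith
      linarith
  · -- upper bound
    filter_upwards [Filter.eventually_atTop.2 ⟨2 * N + 2, fun n hn => hn⟩] with n hn
    rcases le_or_gt 0 (d n) with hdn | hdn
    · refine le_trans ?_ (le_max_right _ _)
      have hmn : n ≤ 2 * n := by omega
      have hsum : ((2 * n - n : ℕ) : ℝ) * (α * d n) ≤ a (2 * n) - a n := by
        rw [← htel n (2 * n) hmn]
        calc ((2 * n - n : ℕ) : ℝ) * (α * d n)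
            = ∑ i ∈ Finset.Ico n (2 * n), α * d n := by
              rw [Finset.sum_const, Nat.card_Ico]; simp [mul_comm]
          _ ≤ ∑ i ∈ Finset.Ico n (2 * n), d i * (t (i + 1) - t i) := by
              apply Finset.sum_le_sum
              intro i hi
              obtain ⟨hi1, hi2⟩ := Finset.mem_Ico.1 hi
              have hdi : d n ≤ d i := hat hi1
              have hdi0 : (0:ℝ) ≤ d i := le_trans hdn hdi
              have h1 : d i * α ≤ d i * (t (i + 1) - t i) :=
                mul_le_mul_of_nonneg_left (hN i (by omega)) hdi0
              nlinarith
      have hcast : ((2 * n - n : ℕ) : ℝ) = (n : ℝ) := by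
        have : 2 * n - n = n := by omega
        rw [this]
      rw [hcast] at hsum
      rw [le_div_iff₀ hα]
      nlinarith
    · exact le_trans (mul_nonpos_of_nonneg_of_nonpos (Nat.cast_nonneg n) hdn.le)
        (le_max_left _ _)
end

section
/- Let n ≥ 2, let a = (a_1,…,a_n) and b = (b_1,…,b_n) be finite real sequences, and let t = (t_1,…,t_n) be a strictly increasing finite sequence with respect to which both a and b are convex. Let p = (p_1,…,p_n) be nonnegative reals with P_n = ∑_{i=1}^n p_i > 0, and assume S_{n,p}(t,t) > 0. Then S_{n,p}(a,b) ≥ S_{n,p}(a,t) · S_{n,p}(b,t) / S_{n,p}(t,t). -/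
/-- The weighted mean `M_{n,p}(x)` of the values `x 1, …, x n`. -/
noncomputable def Mnp (n : ℕ) (p x : ℕ → ℝ) : ℝ :=
  (∑ i ∈ Finset.Icc 1 n, p i * x i) / (∑ i ∈ Finset.Icc 1 n, p i)

/-- The Chebyshev functional `S_{n,p}(x,y) = M_{n,p}(xy) - M_{n,p}(x) M_{n,p}(y)`. -/
noncomputable def Snp (n : ℕ) (p x y : ℕ → ℝ) : ℝ :=
  Mnp n p (fun i => x i * y i) - Mnp n p x * Mnp n p y

/- ## Auxiliary lemmas -/

lemma t_lt (n : ℕ) (t : ℕ → ℝ) (ht : ∀ i, 1 ≤ i → i < n → t i < t (i + 1)) :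
    ∀ i j, 1 ≤ i → i < j → j ≤ n → t i < t j := by
  intro i j hi hij hjn
  induction j with
  | zero => omega
  | succ k ih =>
    rcases Nat.lt_or_ge i k with h | h
    · exact lt_trans (ih h (by omega)) (ht k (by omega) (by omega))
    · have hik : i = k := by omega
      subst hik
      exact ht i hi (by omega)

section Slopes

variable (n : ℕ) (t v : ℕ → ℝ)
variable (ht : ∀ i, 1 ≤ i → i < n → t i < t (i + 1))
variable (hv : ∀ i, 1 ≤ i → i + 2 ≤ n →
      (v (i + 1) - v i) / (t (i + 1) - t i) ≤
        (v (i + 2) - v (i + 1)) / (t (i + 2) - t (i + 1)))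

include ht hv in
lemma slope_mono : ∀ k l, 1 ≤ k → k ≤ l → l + 1 ≤ n →
    (v (k + 1) - v k) / (t (k + 1) - t k) ≤ (v (l + 1) - v l) / (t (l + 1) - t l) := by
  intro k l hk hkl
  induction l, hkl using Nat.le_induction with
  | base => intro _; exact le_rfl
  | succ m hkm ih =>
    intro hln
    have h1 := ih (by omega)
    have h2 := hv m (by omega) (by omega)
    exact le_trans h1 h2

include ht hv in
lemma chord_le_slope : ∀ j i, 1 ≤ i → i ≤ j → j + 1 ≤ n →
    (v (j + 1) - v i) / (t (j + 1) - t i) ≤ (v (j + 1) - v j) / (t (j + 1) - t j) := by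
  intro j
  induction j with
  | zero => intro i h1 h2 _; omega
  | succ m ih =>
    intro i h1 h2 h3
    rcases eq_or_lt_of_le h2 with heq | hlt
    · subst heq; exact le_rfl
    · have him : i ≤ m := by omega
      have hm1 : 1 ≤ m := le_trans h1 him
      have ihm := ih i h1 him (by omega)
      have hmono := slope_mono n t v ht hv m (m + 1) hm1 (Nat.le_succ m) h3
      have hd1 := le_trans ihm hmono
      have w1 : (0:ℝ) < t (m + 1) - t i := by
        rcases eq_or_lt_of_le him with heq2 | hlt2
        · subst heq2; exact sub_pos.mpr (ht i h1 (by omega))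
        · exact sub_pos.mpr (t_lt n t ht i (m + 1) h1 (by omega) (by omega))
      have w2 : (0:ℝ) < t (m + 1 + 1) - t (m + 1) := sub_pos.mpr (ht (m + 1) (by omega) (by omega))
      have wtot : (0:ℝ) < t (m + 1 + 1) - t i := by linarith
      rw [div_le_div_iff₀ wtot w2]
      rw [div_le_div_iff₀ w1 w2] at hd1
      nlinarith [hd1]

include ht hv in
lemma slope_le_chord : ∀ i, 1 ≤ i → ∀ j, i < j → j ≤ n →
    (v (i + 1) - v i) / (t (i + 1) - t i) ≤ (v j - v i) / (t j - t i) := by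
  intro i hi j hij
  induction j, hij using Nat.le_induction with
  | base => intro _; exact le_rfl
  | succ m hm ih =>
    intro hmn
    have h1 := ih (by omega)
    have h2 := slope_mono n t v ht hv i m hi (by omega) (by omega)
    have w1 : (0:ℝ) < t m - t i := sub_pos.mpr (t_lt n t ht i m hi (by omega) (by omega))
    have w2 : (0:ℝ) < t (m + 1) - t m := sub_pos.mpr (ht m (by omega) (by omega))
    have wtot : (0:ℝ) < t (m + 1) - t i := by linarith
    rw [le_div_iff₀ wtot]
    rw [le_div_iff₀ w1] at h1
    rw [le_div_iff₀ w2] at h2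
    nlinarith [h1, h2]

include ht hv in
lemma chord_chord : ∀ i j k, 1 ≤ i → i < j → j < k → k ≤ n →
    (v j - v i) / (t j - t i) ≤ (v k - v j) / (t k - t j) := by
  intro i j k hi hij hjk hkn
  obtain ⟨m, rfl⟩ : ∃ m, j = m + 1 := ⟨j - 1, by omega⟩
  have h1 := chord_le_slope n t v ht hv m i hi (by omega) (by omega)
  have h2 := slope_mono n t v ht hv m (m + 1) (by omega) (Nat.le_succ m) (by omega)
  have h3 := slope_le_chord n t v ht hv (m + 1) (by omega) k hjk hkn
  exact le_trans h1 (le_trans h2 h3)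

include ht hv in
lemma chord_mono_right : ∀ i j k, 1 ≤ i → i < j → j < k → k ≤ n →
    (v j - v i) / (t j - t i) ≤ (v k - v i) / (t k - t i) := by
  intro i j k hi hij hjk hkn
  have hA := chord_chord n t v ht hv i j k hi hij hjk hkn
  have wij : (0:ℝ) < t j - t i := sub_pos.mpr (t_lt n t ht i j hi hij (by omega))
  have wjk : (0:ℝ) < t k - t j := sub_pos.mpr (t_lt n t ht j k (by omega) hjk hkn)
  have wik : (0:ℝ) < t k - t i := by linarith
  rw [div_le_div_iff₀ wij wjk] at hA
  rw [div_le_div_iff₀ wij wik]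
  nlinarith [hA]

include ht hv in
lemma chord_mono_left : ∀ i j k, 1 ≤ i → i < j → j < k → k ≤ n →
    (v k - v i) / (t k - t i) ≤ (v k - v j) / (t k - t j) := by
  intro i j k hi hij hjk hkn
  have hA := chord_chord n t v ht hv i j k hi hij hjk hkn
  have wij : (0:ℝ) < t j - t i := sub_pos.mpr (t_lt n t ht i j hi hij (by omega))
  have wjk : (0:ℝ) < t k - t j := sub_pos.mpr (t_lt n t ht j k (by omega) hjk hkn)
  have wik : (0:ℝ) < t k - t i := by linarith
  rw [div_le_div_iff₀ wij wjk] at hA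
  rw [div_le_div_iff₀ wik wjk]
  nlinarith [hA]

end Slopes

lemma sum_sub_mul (s : Finset ℕ) (p x z : ℕ → ℝ) (c : ℝ) :
    ∑ i ∈ s, p i * (x i - c * z i) = ∑ i ∈ s, p i * x i - c * ∑ i ∈ s, p i * z i := by
  rw [Finset.mul_sum, ← Finset.sum_sub_distrib]
  exact Finset.sum_congr rfl fun i _ => by ring

lemma Snp_sub_left (n : ℕ) (p x y z : ℕ → ℝ) (c : ℝ) :
    Snp n p (fun i => x i - c * z i) y = Snp n p x y - c * Snp n p z y := by
  simp only [Snp, Mnp]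
  have h1 : ∑ i ∈ Finset.Icc 1 n, p i * ((x i - c * z i) * y i)
      = ∑ i ∈ Finset.Icc 1 n, p i * (x i * y i)
        - c * ∑ i ∈ Finset.Icc 1 n, p i * (z i * y i) := by
    rw [Finset.mul_sum, ← Finset.sum_sub_distrib]
    exact Finset.sum_congr rfl fun i _ => by ring
  have h2 : ∑ i ∈ Finset.Icc 1 n, p i * (x i - c * z i)
      = ∑ i ∈ Finset.Icc 1 n, p i * x i - c * ∑ i ∈ Finset.Icc 1 n, p i * z i :=
    sum_sub_mul _ p x z c
  rw [h1, h2]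
  ring

lemma Snp_comm (n : ℕ) (p x y : ℕ → ℝ) : Snp n p x y = Snp n p y x := by
  simp only [Snp, Mnp]
  have h : ∑ i ∈ Finset.Icc 1 n, p i * (x i * y i)
      = ∑ i ∈ Finset.Icc 1 n, p i * (y i * x i) :=
    Finset.sum_congr rfl fun i _ => by ring
  rw [h]
  ring

/-- The core positivity lemma: if `u` and `v` are convex w.r.t. `t` and
`S_{n,p}(u,t) = 0`, then `S_{n,p}(u,v) ≥ 0`. -/
lemma core (n : ℕ) (hn : 2 ≤ n) (t u v p : ℕ → ℝ)
    (ht : ∀ i, 1 ≤ i → i < n → t i < t (i + 1))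
    (hu : ∀ i, 1 ≤ i → i + 2 ≤ n →
      (u (i + 1) - u i) / (t (i + 1) - t i) ≤
        (u (i + 2) - u (i + 1)) / (t (i + 2) - t (i + 1)))
    (hv : ∀ i, 1 ≤ i → i + 2 ≤ n →
      (v (i + 1) - v i) / (t (i + 1) - t i) ≤
        (v (i + 2) - v (i + 1)) / (t (i + 2) - t (i + 1)))
    (hp : ∀ i, 0 ≤ p i) (hP : 0 < ∑ i ∈ Finset.Icc 1 n, p i)
    (hut : Snp n p u t = 0) : 0 ≤ Snp n p u v := by
  set F := Finset.Icc 1 n with hF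
  set P := ∑ i ∈ F, p i with hPdef
  set m := Mnp n p u with hm
  have hPn : P ≠ 0 := ne_of_gt hP
  have hum : ∑ i ∈ F, p i * u i = m * P := by
    rw [hm, Mnp, ← hF, ← hPdef, div_mul_cancel₀ _ hPn]
  have hq0 : ∑ i ∈ F, p i * (u i - m) = 0 := by
    have h : ∑ i ∈ F, p i * (u i - m) = ∑ i ∈ F, p i * u i - m * ∑ i ∈ F, p i := by
      rw [Finset.mul_sum, ← Finset.sum_sub_distrib]
      exact Finset.sum_congr rfl fun i _ => by ring
    rw [h, hum, ← hPdef]; ring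
  have hqt : ∑ i ∈ F, p i * (u i - m) * t i = 0 := by
    have hkey : ∑ i ∈ F, p i * (u i * t i) = m * ∑ i ∈ F, p i * t i := by
      have h := hut
      rw [Snp, ← hm, Mnp, Mnp, ← hF, ← hPdef] at h
      field_simp at h
      simp only [mul_assoc, mul_zero] at h
      linarith
    have h : ∑ i ∈ F, p i * (u i - m) * t i
        = ∑ i ∈ F, p i * (u i * t i) - m * ∑ i ∈ F, p i * t i := by
      rw [Finset.mul_sum, ← Finset.sum_sub_distrib]
      exact Finset.sum_congr rfl fun i _ => by ring
    rw [h, hkey]; ring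
  have hSuv : Snp n p u v = (∑ i ∈ F, p i * (u i - m) * v i) / P := by
    rw [Snp, ← hm, Mnp, Mnp, ← hF, ← hPdef]
    have h : ∑ i ∈ F, p i * (u i - m) * v i
        = ∑ i ∈ F, p i * (u i * v i) - m * ∑ i ∈ F, p i * v i := by
      rw [Finset.mul_sum, ← Finset.sum_sub_distrib]
      exact Finset.sum_congr rfl fun i _ => by ring
    rw [h]
    ring
  suffices hkey : 0 ≤ ∑ i ∈ F, p i * (u i - m) * v i by
    rw [hSuv]; exact div_nonneg hkey (le_of_lt hP)
  by_cases hN : (F.filter (fun i => u i < m)).Nonempty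
  · set N := F.filter (fun i => u i < m) with hNdef
    obtain ⟨r, hrN, hrmin⟩ : ∃ r ∈ N, ∀ i ∈ N, r ≤ i :=
      ⟨N.min' hN, N.min'_mem hN, fun i hi => N.min'_le i hi⟩
    obtain ⟨s, hsN, hsmax⟩ : ∃ s ∈ N, ∀ i ∈ N, i ≤ s :=
      ⟨N.max' hN, N.max'_mem hN, fun i hi => N.le_max' i hi⟩
    obtain ⟨hrF, hur⟩ := Finset.mem_filter.mp hrN
    obtain ⟨hsF, hus⟩ := Finset.mem_filter.mp hsN
    obtain ⟨hr1, hrn⟩ := Finset.mem_Icc.mp hrF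
    obtain ⟨hs1, hsn⟩ := Finset.mem_Icc.mp hsF
    have hrs : r ≤ s := hsmax r hrN
    obtain ⟨lam, hL1, hL2, hL3⟩ : ∃ lam : ℝ,
        (∀ i, 1 ≤ i → i < r → (v r - v i) / (t r - t i) ≤ lam) ∧
        (∀ i, r < i → i ≤ s → (v i - v r) / (t i - t r) ≤ lam) ∧
        (∀ i, s < i → i ≤ n → lam ≤ (v i - v r) / (t i - t r)) := by
      rcases lt_or_eq_of_le hrs with hlt | heq
      · refine ⟨(v s - v r) / (t s - t r), ?_, ?_, ?_⟩
        · intro i h1 h2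
          exact chord_chord n t v ht hv i r s h1 h2 hlt hsn
        · intro i h1 h2
          rcases eq_or_lt_of_le h2 with heq2 | h2'
          · subst heq2; exact le_rfl
          · exact chord_mono_right n t v ht hv r i s hr1 h1 h2' hsn
        · intro i h1 h2
          exact chord_mono_right n t v ht hv r s i hr1 hlt h1 h2
      · rcases lt_or_eq_of_le hrn with hrn' | hrn'
        · refine ⟨(v (r + 1) - v r) / (t (r + 1) - t r), ?_, ?_, ?_⟩
          · intro i h1 h2
            exact chord_chord n t v ht hv i r (r + 1) h1 h2 (Nat.lt_succ_self r) (by omega)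
          · intro i h1 h2
            omega
          · intro i h1 h2
            rcases Nat.lt_or_ge (r + 1) i with h | h
            · exact chord_mono_right n t v ht hv r (r + 1) i hr1 (Nat.lt_succ_self r) h h2
            · have hi : i = r + 1 := by omega
              subst hi; exact le_rfl
        · -- r = s = n
          obtain ⟨k, rfl⟩ : ∃ k, n = k + 1 := ⟨n - 1, by omega⟩
          have hk1 : 1 ≤ k := by omega
          refine ⟨(v (k + 1) - v k) / (t (k + 1) - t k), ?_, ?_, ?_⟩
          · intro i h1 h2
            have : r = k + 1 := hrn'
            rw [this]
            exact chord_le_slope (k + 1) t v ht hv k i h1 (by omega) le_rfl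
          · intro i h1 h2
            omega
          · intro i h1 h2
            omega
    have hmain : ∀ i ∈ F, p i * (u i - m) * (v r + lam * (t i - t r))
        ≤ p i * (u i - m) * v i := by
      intro i hiF
      obtain ⟨hi1, hin⟩ := Finset.mem_Icc.mp hiF
      by_cases hui : u i < m
      · have hiN : i ∈ N := Finset.mem_filter.mpr ⟨hiF, hui⟩
        have hri : r ≤ i := hrmin i hiN
        have his : i ≤ s := hsmax i hiN
        have hum' : u i - m ≤ 0 := by linarith
        have hQ : p i * (u i - m) ≤ 0 := mul_nonpos_iff.mpr (Or.inl ⟨hp i, hum'⟩)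
        have hline : v i ≤ v r + lam * (t i - t r) := by
          rcases eq_or_lt_of_le hri with heq | hlt
          · subst heq; simp
          · have hd : (0:ℝ) < t i - t r := sub_pos.mpr (t_lt n t ht r i hr1 hlt hin)
            have h2 := hL2 i hlt his
            rw [div_le_iff₀ hd] at h2
            linarith
        exact mul_le_mul_of_nonpos_left hline hQ
      · have hQ : 0 ≤ p i * (u i - m) :=
          mul_nonneg (hp i) (by linarith [not_lt.mp hui])
        have hout : i < r ∨ s < i := by
          by_contra hcon
          push_neg at hcon
          obtain ⟨h1, h2⟩ := hcon
          have hir : r < i := by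
            have : i ≠ r := fun h => hui (by rw [h]; exact hur)
            omega
          have his : i < s := by
            have : i ≠ s := fun h => hui (by rw [h]; exact hus)
            omega
          have d1 : (0:ℝ) < t i - t r := sub_pos.mpr (t_lt n t ht r i hr1 hir hin)
          have d2 : (0:ℝ) < t s - t i := sub_pos.mpr (t_lt n t ht i s hi1 his hsn)
          have d3 : (0:ℝ) < t s - t r := by linarith
          have hDu := chord_mono_right n t u ht hu r i s hr1 hir his hsn
          rw [div_le_div_iff₀ d1 d3] at hDu
          have humi : m ≤ u i := not_lt.mp hui
          nlinarith [mul_pos d2 (sub_pos.mpr hur), mul_pos d1 (sub_pos.mpr hus),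
            mul_le_mul_of_nonneg_right (sub_le_sub_right humi (u r)) (le_of_lt d3)]
        have hline : v r + lam * (t i - t r) ≤ v i := by
          rcases hout with h | h
          · have hd : (0:ℝ) < t r - t i := sub_pos.mpr (t_lt n t ht i r hi1 h hrn)
            have h2 := hL1 i hi1 h
            rw [div_le_iff₀ hd] at h2
            have e : lam * (t i - t r) = -(lam * (t r - t i)) := by ring
            linarith [e]
          · have hd : (0:ℝ) < t i - t r :=
              sub_pos.mpr (t_lt n t ht r i hr1 (lt_of_le_of_lt hrs h) hin)
            have h2 := hL3 i h hin
            rw [le_div_iff₀ hd] at h2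
            linarith
        exact mul_le_mul_of_nonneg_left hline hQ
    have hsum := Finset.sum_le_sum hmain
    have hexp : ∑ i ∈ F, p i * (u i - m) * (v r + lam * (t i - t r))
        = (v r - lam * t r) * ∑ i ∈ F, p i * (u i - m)
          + lam * ∑ i ∈ F, p i * (u i - m) * t i := by
      rw [Finset.mul_sum, Finset.mul_sum, ← Finset.sum_add_distrib]
      exact Finset.sum_congr rfl fun i _ => by ring
    rw [hexp, hq0, hqt] at hsum
    simpa using hsum
  · have hall : ∀ i ∈ F, 0 ≤ p i * (u i - m) := by
      intro i hi
      have h : ¬ u i < m := fun h => hN ⟨i, Finset.mem_filter.mpr ⟨hi, h⟩⟩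
      exact mul_nonneg (hp i) (by linarith [not_lt.mp h])
    have hz := (Finset.sum_eq_zero_iff_of_nonneg hall).mp hq0
    have h : ∑ i ∈ F, p i * (u i - m) * v i = 0 :=
      Finset.sum_eq_zero fun i hi => by rw [hz i hi, zero_mul]
    rw [h]

/-- Lupas-type inequality for sequences `a`, `b` convex with respect to the same
strictly increasing finite sequence `t`. -/
theorem stmt_14 (n : ℕ) (hn : 2 ≤ n) (a b t p : ℕ → ℝ)
    (ht : ∀ i, 1 ≤ i → i < n → t i < t (i + 1))
    (hat : ∀ i, 1 ≤ i → i + 2 ≤ n →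
      (a (i + 1) - a i) / (t (i + 1) - t i) ≤
        (a (i + 2) - a (i + 1)) / (t (i + 2) - t (i + 1)))
    (hbt : ∀ i, 1 ≤ i → i + 2 ≤ n →
      (b (i + 1) - b i) / (t (i + 1) - t i) ≤
        (b (i + 2) - b (i + 1)) / (t (i + 2) - t (i + 1)))
    (hp : ∀ i, 0 ≤ p i) (hP : 0 < ∑ i ∈ Finset.Icc 1 n, p i)
    (hS : 0 < Snp n p t t) :
    Snp n p a b ≥ Snp n p a t * Snp n p b t / Snp n p t t := by
  have hStt : Snp n p t t ≠ 0 := ne_of_gt hS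
  set α := Snp n p a t / Snp n p t t with hα
  have ha' : ∀ i, 1 ≤ i → i + 2 ≤ n →
      ((a (i + 1) - α * t (i + 1)) - (a i - α * t i)) / (t (i + 1) - t i) ≤
        ((a (i + 2) - α * t (i + 2)) - (a (i + 1) - α * t (i + 1))) / (t (i + 2) - t (i + 1)) := by
    intro i h1 h2
    have d1 : (0:ℝ) < t (i + 1) - t i := sub_pos.mpr (ht i h1 (by omega))
    have d2 : (0:ℝ) < t (i + 2) - t (i + 1) := sub_pos.mpr (ht (i + 1) (by omega) (by omega))
    have e1 : ((a (i + 1) - α * t (i + 1)) - (a i - α * t i)) / (t (i + 1) - t i)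
        = (a (i + 1) - a i) / (t (i + 1) - t i) - α := by
      field_simp
      ring
    have e2 : ((a (i + 2) - α * t (i + 2)) - (a (i + 1) - α * t (i + 1))) / (t (i + 2) - t (i + 1))
        = (a (i + 2) - a (i + 1)) / (t (i + 2) - t (i + 1)) - α := by
      field_simp
      ring
    rw [e1, e2]
    have h := hat i h1 h2
    linarith
  have hat0 : Snp n p (fun i => a i - α * t i) t = 0 := by
    rw [Snp_sub_left n p a t t α, hα, div_mul_cancel₀ _ hStt, sub_self]
  have hcore := core n hn t (fun i => a i - α * t i) b p ht ha' hbt hp hP hat0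
  have hfin : Snp n p (fun i => a i - α * t i) b = Snp n p a b - α * Snp n p t b :=
    Snp_sub_left n p a b t α
  have hcb : Snp n p t b = Snp n p b t := Snp_comm n p t b
  have hmul : α * Snp n p b t = Snp n p a t * Snp n p b t / Snp n p t t := by
    rw [hα, div_mul_eq_mul_div]
  rw [ge_iff_le]
  rw [hfin, hcb] at hcore
  linarith [hcore, hmul]
end

section
/- Let n ≥ 2, let a = (a_1,…,a_n) and b = (b_1,…,b_n) be finite real sequences, and let t = (t_1,…,t_n) be a strictly increasing finite sequence with respect to which both a and b are convex. Then ∑_{i=1}^n a_i b_i − (1/n) ∑_{i=1}^n a_i · ∑_{i=1}^n b_i ≥ K_n(t) · (∑_{i=1}^n (t_i − T̄) a_i) · (∑_{i=1}^n (t_i − T̄) b_i), where T̄ = (1/n) ∑_{i=1}^n t_i and K_n(t) = 1 / (∑_{i=1}^n t_i² − (1/n)(∑_{i=1}^n t_i)²). -/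
open Finset


lemma tri_swap (u N : ℕ) (F : ℕ → ℕ → ℝ) :
    ∑ m ∈ Icc u N, ∑ j ∈ Icc u m, F m j = ∑ j ∈ Icc u N, ∑ m ∈ Icc j N, F m j := by
  rw [Finset.sum_sigma', Finset.sum_sigma']
  apply Finset.sum_nbij' (fun p => ⟨p.2, p.1⟩) (fun p => ⟨p.2, p.1⟩) <;>
    simp (config := {contextual := true}) [Finset.mem_sigma, Finset.mem_Icc] <;> omega

lemma tele (f : ℕ → ℝ) (i k : ℕ) (h : i ≤ k + 1) :
    ∑ m ∈ Icc i k, (f (m+1) - f m) = f (k+1) - f i := by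
  induction k with
  | zero => interval_cases i <;> simp
  | succ k ih =>
    rcases Nat.lt_or_ge i (k+2) with h'|h'
    · rw [Finset.sum_Icc_succ_top (by omega), ih (by omega)]; ring
    · have : i = k + 2 := by omega
      subst this; simp

lemma shift (g : ℕ → ℝ) (u N : ℕ) (hu : 1 ≤ u) :
    ∑ j ∈ Icc (u+1) N, g j = ∑ j ∈ Icc u (N-1), g (j+1) := by
  rcases Nat.eq_zero_or_pos N with h|h
  · subst h
    rw [Finset.Icc_eq_empty (by omega), Finset.Icc_eq_empty (by omega)]
    simp
  · obtain ⟨M, rfl⟩ : ∃ M, N = M + 1 := ⟨N - 1, by omega⟩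
    rw [← Finset.map_add_right_Icc u M 1, Finset.sum_map]
    simp [addRightEmbedding]

lemma abel_tail (f h : ℕ → ℝ) (u N : ℕ) (hu : 1 ≤ u) :
    ∑ m ∈ Icc u N, f m * h m =
      f u * ∑ j ∈ Icc u N, h j +
        ∑ m ∈ Icc u (N-1), (f (m+1) - f m) * ∑ j ∈ Icc (m+1) N, h j := by
  rcases Nat.lt_or_ge N u with hNu|hNu
  · have h1 : Icc u N = (∅ : Finset ℕ) := Finset.Icc_eq_empty (by omega)
    have h2 : Icc u (N-1) = (∅ : Finset ℕ) := Finset.Icc_eq_empty (by omega)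
    rw [h1, h2]; simp
  -- now u ≤ N
  have e1 : ∀ m ∈ Icc u (N-1), (f (m+1) - f m) * ∑ j ∈ Icc (m+1) N, h j
      = ∑ j ∈ Icc m (N-1), (f (m+1) - f m) * h (j+1) := by
    intro m hm
    simp only [Finset.mem_Icc] at hm
    rw [shift h m N (by omega), Finset.mul_sum]
  rw [Finset.sum_congr rfl e1,
    ← tri_swap u (N-1) (fun m j => (f (j+1) - f j) * h (m+1))]
  have e2 : ∀ j ∈ Icc u (N-1), ∑ m ∈ Icc u j, (f (m+1) - f m) * h (j+1)
      = (f (j+1) - f u) * h (j+1) := by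
    intro j hj
    simp only [Finset.mem_Icc] at hj
    rw [← Finset.sum_mul, tele f u j (by omega)]
  rw [Finset.sum_congr rfl e2]
  have e3 : ∑ j ∈ Icc u (N-1), (f (j+1) - f u) * h (j+1)
      = ∑ j ∈ Icc u (N-1), (f (j+1) * h (j+1)) - f u * ∑ j ∈ Icc u (N-1), h (j+1) := by
    rw [Finset.mul_sum, ← Finset.sum_sub_distrib]; congr 1; ext j; ring
  rw [e3, ← shift (fun j => f j * h j) u N hu, ← shift h u N hu]
  have e4 : ∀ g : ℕ → ℝ, ∑ m ∈ Icc u N, g m = g u + ∑ m ∈ Icc (u+1) N, g m := by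
    intro g
    rw [← Finset.Ioc_insert_left hNu, Finset.sum_insert (by simp), Finset.Icc_add_one_left_eq_Ioc]
  rw [e4 (fun m => f m * h m), e4 h]
  ring

lemma icc_split (g : ℕ → ℝ) (m M : ℕ) (h : m ≤ M) :
    ∑ i ∈ Icc 1 m, g i + ∑ i ∈ Icc (m+1) M, g i = ∑ i ∈ Icc 1 M, g i := by
  rw [← Finset.Ico_add_one_right_eq_Icc 1 m, ← Finset.Ico_add_one_right_eq_Icc (m+1) M, ← Finset.Ico_add_one_right_eq_Icc 1 M]
  exact Finset.sum_Ico_consecutive g (by omega) (by omega)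

lemma key (n : ℕ) (hn : 2 ≤ n) (a c t : ℕ → ℝ)
    (ht : ∀ i, 1 ≤ i → i < n → t i < t (i + 1))
    (hat : ∀ i, 1 ≤ i → i + 2 ≤ n →
      (a (i + 1) - a i) / (t (i + 1) - t i) ≤
        (a (i + 2) - a (i + 1)) / (t (i + 2) - t (i + 1)))
    (hct2 : ∀ i, 1 ≤ i → i + 2 ≤ n →
      (c (i + 1) - c i) / (t (i + 1) - t i) ≤
        (c (i + 2) - c (i + 1)) / (t (i + 2) - t (i + 1)))
    (hc0 : ∑ i ∈ Icc 1 n, c i = 0)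
    (hct : ∑ i ∈ Icc 1 n, t i * c i = 0) :
    0 ≤ ∑ i ∈ Icc 1 n, a i * c i := by
  set S : ℕ → ℝ := fun m => ∑ i ∈ Icc 1 m, c i with hS
  have hdt : ∀ m, 1 ≤ m → m + 1 ≤ n → 0 < t (m+1) - t m := fun m h1 h2 =>
    sub_pos.mpr (ht m h1 (by omega))
  -- tail sums of c are -S
  have htail : ∀ m ∈ Icc 1 (n-1), ∑ j ∈ Icc (m+1) n, c j = -S m := by
    intro m hm
    simp only [Finset.mem_Icc] at hm
    have := icc_split c m n (by omega)
    simp only [hS]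
    linarith [hc0]
  -- D2 : for any f, ∑ f c = -∑ Δf * S
  have hD2 : ∀ f : ℕ → ℝ, ∑ i ∈ Icc 1 n, f i * c i
      = -∑ m ∈ Icc 1 (n-1), (f (m+1) - f m) * S m := by
    intro f
    rw [abel_tail f c 1 n le_rfl, hc0, mul_zero, zero_add,
      Finset.sum_congr rfl (fun m hm => by rw [htail m hm])]
    rw [← Finset.sum_neg_distrib]
    congr 1; ext m; ring
  -- SUM0
  have hSUM0 : ∑ m ∈ Icc 1 (n-1), (t (m+1) - t m) * S m = 0 := by
    have := hD2 t
    rw [hct] at this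
    linarith
  -- sign-change property of S
  have hsign : ∀ p q, 1 ≤ p → p < q → q ≤ n - 1 → S p < 0 → S q ≤ 0 := by
    intro p q hp hpq hq hSp
    by_contra hSq
    push_neg at hSq
    obtain ⟨i, hi, hci⟩ : ∃ i ∈ Icc 1 p, c i < 0 := by
      obtain ⟨i, hi, h⟩ := Finset.exists_lt_of_sum_lt
        (show ∑ i ∈ Icc 1 p, c i < ∑ i ∈ Icc 1 p, (0:ℝ) by simpa using hSp)
      exact ⟨i, hi, h⟩
    obtain ⟨j, hj, hcj⟩ : ∃ j ∈ Icc (p+1) q, 0 < c j := by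
      have hsum : (0:ℝ) < ∑ i ∈ Icc (p+1) q, c i := by
        have := icc_split c p q (by omega)
        simp only [hS] at hSp hSq ⊢
        linarith
      obtain ⟨j, hj, h⟩ := Finset.exists_lt_of_sum_lt
        (show ∑ i ∈ Icc (p+1) q, (0:ℝ) < ∑ i ∈ Icc (p+1) q, c i by simpa using hsum)
      exact ⟨j, hj, h⟩
    obtain ⟨r, hr, hcr⟩ : ∃ r ∈ Icc (q+1) n, c r < 0 := by
      have hsum : ∑ i ∈ Icc (q+1) n, c i < 0 := by
        have := icc_split c q n (by omega)
        simp only [hS] at hSq ⊢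
        linarith [hc0]
      obtain ⟨r, hr, h⟩ := Finset.exists_lt_of_sum_lt
        (show ∑ i ∈ Icc (q+1) n, c i < ∑ i ∈ Icc (q+1) n, (0:ℝ) by simpa using hsum)
      exact ⟨r, hr, h⟩
    simp only [Finset.mem_Icc] at hi hj hr
    obtain ⟨m1, hm1, hd1⟩ : ∃ m1 ∈ Icc i (j-1), 0 < c (m1+1) - c m1 := by
      have htel : ∑ m ∈ Icc i (j-1), (c (m+1) - c m) = c j - c i := by
        have := tele c i (j-1) (by omega)
        rwa [show j - 1 + 1 = j by omega] at this
      obtain ⟨m1, hm1, h⟩ := Finset.exists_lt_of_sum_lt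
        (show ∑ m ∈ Icc i (j-1), (0:ℝ) < ∑ m ∈ Icc i (j-1), (c (m+1) - c m) by
          rw [htel]; simpa using by linarith)
      exact ⟨m1, hm1, h⟩
    obtain ⟨m2, hm2, hd2⟩ : ∃ m2 ∈ Icc j (r-1), c (m2+1) - c m2 < 0 := by
      have htel : ∑ m ∈ Icc j (r-1), (c (m+1) - c m) = c r - c j := by
        have := tele c j (r-1) (by omega)
        rwa [show r - 1 + 1 = r by omega] at this
      obtain ⟨m2, hm2, h⟩ := Finset.exists_lt_of_sum_lt
        (show ∑ m ∈ Icc j (r-1), (c (m+1) - c m) < ∑ m ∈ Icc j (r-1), (0:ℝ) by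
          rw [htel]; simpa using by linarith)
      exact ⟨m2, hm2, h⟩
    simp only [Finset.mem_Icc] at hm1 hm2
    -- slope monotonicity
    have hmono : ∀ u v : ℕ, 1 ≤ u → u ≤ v → v + 1 ≤ n →
        (c (u+1) - c u) / (t (u+1) - t u) ≤ (c (v+1) - c v) / (t (v+1) - t v) := by
      intro u v hu huv hv
      induction v with
      | zero => omega
      | succ v ih =>
        rcases Nat.lt_or_ge u (v+1) with h'|h'
        · have step := hct2 v (by omega) (by omega)
          have := ih (by omega) (by omega)
          calc _ ≤ (c (v+1) - c v) / (t (v+1) - t v) := this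
            _ ≤ _ := by
              have := hct2 v (by omega) (by omega)
              convert this using 3 <;> omega
        · have : u = v + 1 := by omega
          subst this
          exact le_rfl
    have hδ1 : 0 < (c (m1+1) - c m1) / (t (m1+1) - t m1) :=
      div_pos hd1 (hdt m1 (by omega) (by omega))
    have hδ2 : (c (m2+1) - c m2) / (t (m2+1) - t m2) < 0 :=
      div_neg_of_neg_of_pos hd2 (hdt m2 (by omega) (by omega))
    have := hmono m1 m2 (by omega) (by omega) (by omega)
    linarith
  -- G k ≥ 0
  have hG : ∀ k, 2 ≤ k → k ≤ n - 1 →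
      0 ≤ -∑ j ∈ Icc k (n-1), (t (j+1) - t j) * S j := by
    intro k hk2 hkn
    by_cases hp : ∀ j ∈ Icc 1 (k-1), 0 ≤ S j
    · have hsplit := icc_split (fun j => (t (j+1) - t j) * S j) (k-1) (n-1) (by omega)
      rw [show k - 1 + 1 = k by omega] at hsplit
      rw [hSUM0] at hsplit
      have : -∑ j ∈ Icc k (n-1), (t (j+1) - t j) * S j
          = ∑ j ∈ Icc 1 (k-1), (t (j+1) - t j) * S j := by linarith
      rw [this]
      apply Finset.sum_nonneg
      intro j hj
      simp only [Finset.mem_Icc] at hj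
      exact mul_nonneg (le_of_lt (hdt j (by omega) (by omega))) (hp j (by simp [Finset.mem_Icc]; omega))
    · push_neg at hp
      obtain ⟨p, hpmem, hSp⟩ := hp
      simp only [Finset.mem_Icc] at hpmem
      rw [neg_nonneg]
      apply Finset.sum_nonpos
      intro j hj
      simp only [Finset.mem_Icc] at hj
      have hSj : S j ≤ 0 := hsign p j (by omega) (by omega) (by omega) hSp
      exact mul_nonpos_of_nonneg_of_nonpos (le_of_lt (hdt j (by omega) (by omega))) hSj
  -- decomposition
  set A : ℕ → ℝ := fun m => (a (m+1) - a m) / (t (m+1) - t m) with hA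
  have step1 : ∑ i ∈ Icc 1 n, a i * c i
      = -∑ m ∈ Icc 1 (n-1), A m * ((t (m+1) - t m) * S m) := by
    rw [hD2 a]
    congr 1
    apply Finset.sum_congr rfl
    intro m hm
    simp only [Finset.mem_Icc] at hm
    have hne : t (m+1) - t m ≠ 0 := ne_of_gt (hdt m (by omega) (by omega))
    simp only [hA]
    rw [← mul_assoc, div_mul_cancel₀ _ hne]
  rw [step1, abel_tail A (fun m => (t (m+1) - t m) * S m) 1 (n-1) le_rfl, hSUM0,
    mul_zero, zero_add, ← Finset.sum_neg_distrib]
  apply Finset.sum_nonneg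
  intro m hm
  simp only [Finset.mem_Icc] at hm
  have h1 : A m ≤ A (m+1) := hat m (by omega) (by omega)
  have h2 : 0 ≤ -∑ j ∈ Icc (m+1) (n-1), (t (j+1) - t j) * S j :=
    hG (m+1) (by omega) (by omega)
  have : -((A (m+1) - A m) * ∑ j ∈ Icc (m+1) (n-1), (t (j+1) - t j) * S j)
      = (A (m+1) - A m) * (-∑ j ∈ Icc (m+1) (n-1), (t (j+1) - t j) * S j) := by ring
  rw [this]
  exact mul_nonneg (by linarith) h2

/-- Lupas-type inequality with unit weights, for sequences `a`, `b` convex with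
respect to the same strictly increasing finite sequence `t`. -/
theorem stmt_15 (n : ℕ) (hn : 2 ≤ n) (a b t : ℕ → ℝ)
    (ht : ∀ i, 1 ≤ i → i < n → t i < t (i + 1))
    (hat : ∀ i, 1 ≤ i → i + 2 ≤ n →
      (a (i + 1) - a i) / (t (i + 1) - t i) ≤
        (a (i + 2) - a (i + 1)) / (t (i + 2) - t (i + 1)))
    (hbt : ∀ i, 1 ≤ i → i + 2 ≤ n →
      (b (i + 1) - b i) / (t (i + 1) - t i) ≤
        (b (i + 2) - b (i + 1)) / (t (i + 2) - t (i + 1))) :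
    (∑ i ∈ Finset.Icc 1 n, a i * b i) -
        (1 / (n : ℝ)) * (∑ i ∈ Finset.Icc 1 n, a i) * (∑ i ∈ Finset.Icc 1 n, b i) ≥
      (1 / ((∑ i ∈ Finset.Icc 1 n, (t i) ^ 2) -
          (1 / (n : ℝ)) * (∑ i ∈ Finset.Icc 1 n, t i) ^ 2)) *
        (∑ i ∈ Finset.Icc 1 n, (t i - (1 / (n : ℝ)) * ∑ j ∈ Finset.Icc 1 n, t j) * a i) *
        (∑ i ∈ Finset.Icc 1 n, (t i - (1 / (n : ℝ)) * ∑ j ∈ Finset.Icc 1 n, t j) * b i) := by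
  have hn0 : (n : ℝ) ≠ 0 := by
    have : (0:ℝ) < n := by exact_mod_cast Nat.lt_of_lt_of_le (by norm_num) hn
    linarith
  have hcard : (Finset.Icc 1 n).card = n := by simp
  set St := ∑ i ∈ Finset.Icc 1 n, t i with hSt
  set St2 := ∑ i ∈ Finset.Icc 1 n, (t i)^2 with hSt2
  set Sa := ∑ i ∈ Finset.Icc 1 n, a i with hSa
  set Sb := ∑ i ∈ Finset.Icc 1 n, b i with hSb
  set Sab := ∑ i ∈ Finset.Icc 1 n, a i * b i with hSab
  set Sta := ∑ i ∈ Finset.Icc 1 n, t i * a i with hSta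
  set Stb := ∑ i ∈ Finset.Icc 1 n, t i * b i with hStb
  -- expand the tau-sums
  have hTau : ∀ x : ℕ → ℝ, ∑ i ∈ Icc 1 n, (t i - (1/(n:ℝ)) * St) * x i
      = ∑ i ∈ Icc 1 n, t i * x i - (1/(n:ℝ)) * St * ∑ i ∈ Icc 1 n, x i := by
    intro x
    rw [Finset.sum_congr rfl (fun i _ => sub_mul (t i) _ (x i)), Finset.sum_sub_distrib,
      ← Finset.mul_sum]
  -- positivity of P
  set P := St2 - (1/(n:ℝ)) * St^2 with hPdef
  have hsq : ∑ i ∈ Icc 1 n, (t i - (1/(n:ℝ))*St)^2 = P := by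
    simp only [sub_sq]
    rw [Finset.sum_add_distrib, Finset.sum_sub_distrib,
      Finset.sum_congr rfl
        (fun i _ => by ring : ∀ i ∈ Icc 1 n, 2 * t i * ((1/(n:ℝ))*St) = ((2/(n:ℝ))*St) * t i),
      ← Finset.mul_sum, Finset.sum_const, hcard, hPdef, ← hSt, ← hSt2]
    field_simp
    have hnn : (n:ℝ)^2 * (n:ℝ)⁻¹^2 = 1 := by rw [← mul_pow, mul_inv_cancel₀ hn0, one_pow]
    linear_combination St^2 * hnn
  have hP : 0 < P := by
    have hnonneg : 0 ≤ P := by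
      rw [← hsq]; exact Finset.sum_nonneg fun i _ => sq_nonneg _
    rcases lt_or_eq_of_le hnonneg with h|h
    · exact h
    · exfalso
      have hz : ∀ i ∈ Icc 1 n, (t i - (1/(n:ℝ))*St)^2 = 0 := by
        rw [← Finset.sum_eq_zero_iff_of_nonneg (fun i _ => sq_nonneg _)]
        rw [hsq]; exact h.symm
      have h1 : t 1 = (1/(n:ℝ))*St := by
        have := hz 1 (by simp [Finset.mem_Icc]; omega)
        have := sq_eq_zero_iff.mp this; linarith
      have h2 : t 2 = (1/(n:ℝ))*St := by
        have := hz 2 (by simp [Finset.mem_Icc]; omega)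
        have := sq_eq_zero_iff.mp this; linarith
      have := ht 1 le_rfl (by omega)
      rw [show (1:ℕ)+1 = 2 by rfl] at this
      linarith
  have hPne : P ≠ 0 := ne_of_gt hP
  -- the reduced sequence c
  set l := (Stb - (1/(n:ℝ))*St*Sb)/P with hl
  have hlP : l * P = Stb - (1/(n:ℝ))*St*Sb := div_mul_cancel₀ _ hPne
  set c : ℕ → ℝ := fun i => b i - l * t i - (1/(n:ℝ))*(Sb - l*St) with hc
  have hc0 : ∑ i ∈ Icc 1 n, c i = 0 := by
    simp only [hc]
    rw [Finset.sum_sub_distrib, Finset.sum_sub_distrib, ← Finset.mul_sum,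
      Finset.sum_const, hcard, ← hSb, ← hSt]
    rw [nsmul_eq_mul, ← mul_assoc, mul_one_div_cancel hn0, one_mul, sub_self]
  have hct : ∑ i ∈ Icc 1 n, t i * c i = 0 := by
    simp only [hc]
    rw [Finset.sum_congr rfl (fun i _ => by ring :
        ∀ i ∈ Icc 1 n, t i * (b i - l * t i - (1/(n:ℝ))*(Sb - l*St))
          = t i * b i - l * (t i)^2 - ((1/(n:ℝ))*(Sb - l*St)) * t i),
      Finset.sum_sub_distrib, Finset.sum_sub_distrib, ← Finset.mul_sum, ← Finset.mul_sum,
      ← hStb, ← hSt2, ← hSt]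
    have : Stb = l * P + (1/(n:ℝ))*St*Sb := by rw [hlP]; ring
    rw [this, hPdef]
    field_simp
    ring
  have hconvc : ∀ i, 1 ≤ i → i + 2 ≤ n →
      (c (i + 1) - c i) / (t (i + 1) - t i) ≤
        (c (i + 2) - c (i + 1)) / (t (i + 2) - t (i + 1)) := by
    intro i h1 h2
    have hd1 : t (i+1) - t i ≠ 0 := ne_of_gt (sub_pos.mpr (ht i h1 (by omega)))
    have hd2 : t (i+2) - t (i+1) ≠ 0 := by
      have := ht (i+1) (by omega) (by omega)
      have : t (i+1) < t (i+2) := by convert this using 2 <;> omega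
      exact ne_of_gt (sub_pos.mpr this)
    have e1 : (c (i+1) - c i) / (t (i+1) - t i)
        = (b (i+1) - b i) / (t (i+1) - t i) - l := by
      have : c (i+1) - c i = (b (i+1) - b i) - l * (t (i+1) - t i) := by
        simp only [hc]; ring
      rw [this, sub_div, mul_div_assoc, div_self hd1, mul_one]
    have e2 : (c (i+2) - c (i+1)) / (t (i+2) - t (i+1))
        = (b (i+2) - b (i+1)) / (t (i+2) - t (i+1)) - l := by
      have : c (i+2) - c (i+1) = (b (i+2) - b (i+1)) - l * (t (i+2) - t (i+1)) := by
        simp only [hc]; ring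
      rw [this, sub_div, mul_div_assoc, div_self hd2, mul_one]
    rw [e1, e2]
    have := hbt i h1 h2
    linarith
  have hkey := key n hn a c t ht hat hconvc hc0 hct
  have hsum : ∑ i ∈ Icc 1 n, a i * c i
      = Sab - l * Sta - (1/(n:ℝ))*(Sb - l*St) * Sa := by
    simp only [hc]
    rw [Finset.sum_congr rfl (fun i _ => by ring :
        ∀ i ∈ Icc 1 n, a i * (b i - l * t i - (1/(n:ℝ))*(Sb - l*St))
          = a i * b i - l * (t i * a i) - ((1/(n:ℝ))*(Sb - l*St)) * a i),
      Finset.sum_sub_distrib, Finset.sum_sub_distrib, ← Finset.mul_sum, ← Finset.mul_sum,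
      ← hSab, ← hSta, ← hSa]
  rw [ge_iff_le, hTau a, hTau b, ← hSta, ← hStb, ← hSa, ← hSb, ← sub_nonneg]
  have hfinal : Sab - 1/(n:ℝ) * Sa * Sb -
      1/P * (Sta - 1/(n:ℝ) * St * Sa) * (Stb - 1/(n:ℝ) * St * Sb)
      = Sab - l * Sta - (1/(n:ℝ))*(Sb - l*St) * Sa := by
    rw [hl]
    field_simp
    ring
  rw [hfinal] at *
  linarith [hkey, hsum]
end

section
/- Let n ≥ 2, let I ⊆ ℝ be an interval and ψ : I → ℝ a non-decreasing convex function. Let a = (a_1,…,a_n) with all a_i ∈ I be a finite sequence that is convex with respect to a strictly increasing finite sequence t = (t_1,…,t_n). Let p = (p_1,…,p_n) be nonnegative reals with P_n = ∑_{i=1}^n p_i > 0, set M = (1/P_n) ∑_{i=1}^n p_i t_i, and let m (1 ≤ m ≤ n−1) be an index with t_m ≤ M < t_{m+1}. Set γ = (M − t_m)/(t_{m+1} − t_m) and λ = (t_n − M)/(t_n − t_1). Then γ·ψ(a_{m+1}) + (1−γ)·ψ(a_m) ≤ (1/P_n) ∑_{i=1}^n p_i ψ(a_i) ≤ λ·ψ(a_1)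 + (1−λ)·ψ(a_n). -/
open Finset

private lemma comp_slope {ψ : ℝ → ℝ} {I : Set ℝ} (hI : Convex ℝ I)
    (hmono : MonotoneOn ψ I) (hconv : ConvexOn ℝ I ψ)
    {u v w h1 h2 : ℝ} (hu : u ∈ I) (hv : v ∈ I) (hw : w ∈ I)
    (h1p : 0 < h1) (h2p : 0 < h2) (hs : (v - u) / h1 ≤ (w - v) / h2) :
    (ψ v - ψ u) / h1 ≤ (ψ w - ψ v) / h2 := by
  have hsum : 0 < h1 + h2 := by linarith
  have hs' : (v - u) * h2 ≤ (w - v) * h1 := by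
    rwa [div_le_div_iff₀ h1p h2p] at hs
  have hl0 : (0:ℝ) ≤ h2 / (h1 + h2) := by positivity
  have hm0 : (0:ℝ) ≤ h1 / (h1 + h2) := by positivity
  have hlm : h2 / (h1 + h2) + h1 / (h1 + h2) = 1 := by field_simp; ring
  have hxI : (h2 / (h1 + h2)) * u + (h1 / (h1 + h2)) * w ∈ I := hI hu hw hl0 hm0 hlm
  have hvle : v ≤ (h2 / (h1 + h2)) * u + (h1 / (h1 + h2)) * w := by
    rw [div_mul_eq_mul_div, div_mul_eq_mul_div, ← add_div, le_div_iff₀ hsum]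
    nlinarith
  have h1' : ψ v ≤ ψ ((h2 / (h1 + h2)) * u + (h1 / (h1 + h2)) * w) := hmono hv hxI hvle
  have h2' : ψ ((h2 / (h1 + h2)) * u + (h1 / (h1 + h2)) * w) ≤
      (h2 / (h1 + h2)) * ψ u + (h1 / (h1 + h2)) * ψ w := by
    have := hconv.2 hu hw hl0 hm0 hlm
    simpa [smul_eq_mul] using this
  have key : ψ v ≤ (h2 / (h1 + h2)) * ψ u + (h1 / (h1 + h2)) * ψ w := le_trans h1' h2'
  rw [div_mul_eq_mul_div, div_mul_eq_mul_div, ← add_div, le_div_iff₀ hsum] at key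
  rw [div_le_div_iff₀ h1p h2p]
  nlinarith [key]

/-- Hermite–Hadamard–Fejér type inequality for a finite sequence `a` convex with
respect to a strictly increasing finite sequence `t`, composed with a non-decreasing
convex function `ψ`. -/
theorem stmt_16 (n : ℕ) (hn : 2 ≤ n) (I : Set ℝ) (hI : Convex ℝ I)
    (ψ : ℝ → ℝ) (hψmono : MonotoneOn ψ I) (hψconv : ConvexOn ℝ I ψ)
    (a t p : ℕ → ℝ)
    (haI : ∀ i, 1 ≤ i → i ≤ n → a i ∈ I)
    (ht : ∀ i, 1 ≤ i → i < n → t i < t (i + 1))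
    (hat : ∀ i, 1 ≤ i → i + 2 ≤ n →
      (a (i + 1) - a i) / (t (i + 1) - t i) ≤
        (a (i + 2) - a (i + 1)) / (t (i + 2) - t (i + 1)))
    (hp : ∀ i, 0 ≤ p i) (hP : 0 < ∑ i ∈ Finset.Icc 1 n, p i)
    (M : ℝ) (hM : M = (∑ i ∈ Finset.Icc 1 n, p i * t i) / (∑ i ∈ Finset.Icc 1 n, p i))
    (m : ℕ) (hm1 : 1 ≤ m) (hmn : m + 1 ≤ n) (hml : t m ≤ M) (hmu : M < t (m + 1))
    (γ lam : ℝ) (hγ : γ = (M - t m) / (t (m + 1) - t m))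
    (hlam : lam = (t n - M) / (t n - t 1)) :
    γ * ψ (a (m + 1)) + (1 - γ) * ψ (a m) ≤
        (1 / (∑ i ∈ Finset.Icc 1 n, p i)) * ∑ i ∈ Finset.Icc 1 n, p i * ψ (a i) ∧
      (1 / (∑ i ∈ Finset.Icc 1 n, p i)) * ∑ i ∈ Finset.Icc 1 n, p i * ψ (a i) ≤
        lam * ψ (a 1) + (1 - lam) * ψ (a n) := by
  set P := ∑ i ∈ Finset.Icc 1 n, p i with hPdef
  set S : ℕ → ℝ := fun i => (ψ (a (i + 1)) - ψ (a i)) / (t (i + 1) - t i) with hSdef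
  -- basic facts
  have hΔ : ∀ i, 1 ≤ i → i < n → 0 < t (i + 1) - t i := by
    intro i h1 h2; have := ht i h1 h2; linarith
  have tmono : ∀ j k, 1 ≤ j → j ≤ k → k ≤ n → t j ≤ t k := by
    intro j k h1 hjk
    induction k, hjk using Nat.le_induction with
    | base => intro _; exact le_refl _
    | succ k hk ih =>
      intro hkn
      have h := ht k (by omega) (by omega)
      have := ih (by omega)
      linarith
  have hb : ∀ i, 1 ≤ i → i < n → ψ (a (i + 1)) - ψ (a i) = S i * (t (i + 1) - t i) := by
    intro i h1 h2
    rw [hSdef]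
    exact (div_mul_cancel₀ _ (hΔ i h1 h2).ne').symm
  have hSstep : ∀ i, 1 ≤ i → i + 2 ≤ n → S i ≤ S (i + 1) := by
    intro i h1 h2
    have hΔ1 := hΔ i h1 (by omega)
    have hΔ2 := hΔ (i + 1) (by omega) (by omega)
    exact comp_slope hI hψmono hψconv (haI i h1 (by omega)) (haI (i + 1) (by omega) (by omega))
      (haI (i + 2) (by omega) h2) hΔ1 hΔ2 (hat i h1 h2)
  have hSmono : ∀ i j, 1 ≤ i → i ≤ j → j + 1 ≤ n → S i ≤ S j := by
    intro i j h1 hij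
    induction j, hij using Nat.le_induction with
    | base => intro _; exact le_refl _
    | succ j hj ih =>
      intro hjn
      have h1' := ih (by omega)
      have h2' := hSstep j (by omega) (by omega)
      linarith
  have hlow : ∀ j, 1 ≤ j → ∀ k, j ≤ k → k ≤ n → S j * (t k - t j) ≤ ψ (a k) - ψ (a j) := by
    intro j hj k hjk
    induction k, hjk using Nat.le_induction with
    | base => intro _; simp
    | succ k hk ih =>
      intro hkn
      have ih' := ih (by omega)
      have hΔk := hΔ k (by omega) (by omega)
      have hbk := hb k (by omega) (by omega)
      have hSjk : S j ≤ S k := hSmono j k hj hk (by omega)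
      nlinarith [mul_le_mul_of_nonneg_right hSjk hΔk.le]
  have hupp : ∀ j, 1 ≤ j → ∀ k, j ≤ k → k + 1 ≤ n → ψ (a k) - ψ (a j) ≤ S k * (t k - t j) := by
    intro j hj k hjk
    induction k, hjk using Nat.le_induction with
    | base => intro _; simp
    | succ k hk ih =>
      intro hkn
      have ih' := ih (by omega)
      have hΔk := hΔ k (by omega) (by omega)
      have hbk := hb k (by omega) (by omega)
      have hSk : S k ≤ S (k + 1) := hSstep k (by omega) (by omega)
      have htj : t j ≤ t (k + 1) := tmono j (k + 1) hj (by omega) (by omega)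
      nlinarith [mul_le_mul_of_nonneg_right hSk (by linarith : (0:ℝ) ≤ t (k + 1) - t j)]
  have hPt : ∑ i ∈ Finset.Icc 1 n, p i * t i = M * P := by
    rw [hM]
    field_simp
  have hΔm : 0 < t (m + 1) - t m := by linarith
  -- LEFT inequality
  have hsupp : ∀ i, 1 ≤ i → i ≤ n → ψ (a m) + S m * (t i - t m) ≤ ψ (a i) := by
    intro i h1 h2
    rcases le_or_gt m i with hmi | him
    · have := hlow m hm1 i hmi h2
      linarith
    · have h := hupp i h1 m him.le hmn
      nlinarith
  have hLle : ∀ i ∈ Finset.Icc 1 n, p i * (ψ (a m) + S m * (t i - t m)) ≤ p i * ψ (a i) := by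
    intro i hi
    rw [Finset.mem_Icc] at hi
    exact mul_le_mul_of_nonneg_left (hsupp i hi.1 hi.2) (hp i)
  have hLsum := Finset.sum_le_sum hLle
  have hLid : ∑ i ∈ Finset.Icc 1 n, p i * (ψ (a m) + S m * (t i - t m)) =
      P * (ψ (a m) + S m * (M - t m)) := by
    have e : ∀ i ∈ Finset.Icc 1 n, p i * (ψ (a m) + S m * (t i - t m)) =
        (ψ (a m) - S m * t m) * p i + S m * (p i * t i) := by intro i _; ring
    rw [Finset.sum_congr rfl e, Finset.sum_add_distrib, ← Finset.mul_sum, ← Finset.mul_sum,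
      hPt, ← hPdef]
    ring
  have hγid : γ * ψ (a (m + 1)) + (1 - γ) * ψ (a m) = ψ (a m) + S m * (M - t m) := by
    rw [hγ, hSdef]
    field_simp
    ring
  constructor
  · rw [hγid, one_div, inv_mul_eq_div, le_div_iff₀ hP]
    calc (ψ (a m) + S m * (M - t m)) * P = P * (ψ (a m) + S m * (M - t m)) := by ring
    _ = ∑ i ∈ Finset.Icc 1 n, p i * (ψ (a m) + S m * (t i - t m)) := hLid.symm
    _ ≤ ∑ i ∈ Finset.Icc 1 n, p i * ψ (a i) := hLsum
  -- RIGHT inequality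
  · have ht1n : t 1 < t n := by
      have h12 := ht 1 le_rfl (by omega)
      have := tmono 2 n (by omega) hn le_rfl
      linarith
    have chord : ∀ i, 1 ≤ i → i ≤ n →
        (t n - t 1) * ψ (a i) ≤ (t n - t i) * ψ (a 1) + (t i - t 1) * ψ (a n) := by
      intro i h1 h2
      rcases h2.eq_or_lt with rfl | hlt
      · nlinarith []
      · have hu := hupp 1 le_rfl i h1 (by omega)
        have hl := hlow i h1 n (by omega) le_rfl
        have hn1 : (0:ℝ) ≤ t n - t i := by
          have := tmono i n h1 (by omega) le_rfl; linarith
        have hn2 : (0:ℝ) ≤ t i - t 1 := by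
          have := tmono 1 i le_rfl h1 h2; linarith
        nlinarith [mul_le_mul_of_nonneg_right hu hn1, mul_le_mul_of_nonneg_right hl hn2]
    have hRle : ∀ i ∈ Finset.Icc 1 n, p i * ((t n - t 1) * ψ (a i)) ≤
        p i * ((t n - t i) * ψ (a 1) + (t i - t 1) * ψ (a n)) := by
      intro i hi
      rw [Finset.mem_Icc] at hi
      exact mul_le_mul_of_nonneg_left (chord i hi.1 hi.2) (hp i)
    have hRsum := Finset.sum_le_sum hRle
    have hRlhs : ∑ i ∈ Finset.Icc 1 n, p i * ((t n - t 1) * ψ (a i)) =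
        (t n - t 1) * ∑ i ∈ Finset.Icc 1 n, p i * ψ (a i) := by
      rw [Finset.mul_sum]
      exact Finset.sum_congr rfl fun i _ => by ring
    have hRid : ∑ i ∈ Finset.Icc 1 n, p i * ((t n - t i) * ψ (a 1) + (t i - t 1) * ψ (a n)) =
        P * ((t n - M) * ψ (a 1) + (M - t 1) * ψ (a n)) := by
      have e : ∀ i ∈ Finset.Icc 1 n, p i * ((t n - t i) * ψ (a 1) + (t i - t 1) * ψ (a n)) =
          (t n * ψ (a 1) - t 1 * ψ (a n)) * p i + (ψ (a n) - ψ (a 1)) * (p i * t i) := by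
        intro i _; ring
      rw [Finset.sum_congr rfl e, Finset.sum_add_distrib, ← Finset.mul_sum, ← Finset.mul_sum,
        hPt, ← hPdef]
      ring
    have hne : t n - t 1 ≠ 0 := sub_ne_zero.2 ht1n.ne'
    have hlam1 : t n - M = lam * (t n - t 1) := by
      rw [hlam, div_mul_cancel₀ _ hne]
    have hlam2 : M - t 1 = (1 - lam) * (t n - t 1) := by
      rw [hlam, sub_mul, one_mul, div_mul_cancel₀ _ hne]
      ring
    rw [one_div, inv_mul_eq_div, div_le_iff₀ hP]
    have hkey : (t n - t 1) * ∑ i ∈ Finset.Icc 1 n, p i * ψ (a i) ≤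
        (t n - t 1) * ((lam * ψ (a 1) + (1 - lam) * ψ (a n)) * P) := by
      calc (t n - t 1) * ∑ i ∈ Finset.Icc 1 n, p i * ψ (a i)
          = ∑ i ∈ Finset.Icc 1 n, p i * ((t n - t 1) * ψ (a i)) := hRlhs.symm
        _ ≤ ∑ i ∈ Finset.Icc 1 n, p i * ((t n - t i) * ψ (a 1) + (t i - t 1) * ψ (a n)) := hRsum
        _ = P * ((t n - M) * ψ (a 1) + (M - t 1) * ψ (a n)) := hRid
        _ = (t n - t 1) * ((lam * ψ (a 1) + (1 - lam) * ψ (a n)) * P) := by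
            rw [hlam1, hlam2]; ring
    exact le_of_mul_le_mul_left hkey (by linarith)
end

section
/- Let n ≥ 2, let I ⊆ ℝ be an interval and ψ : I → ℝ a non-decreasing convex function. Let a = (a_1,…,a_n) with all a_i ∈ I be a convex finite sequence (2a_i ≤ a_{i−1} + a_{i+1} for 2 ≤ i ≤ n−1). Let p = (p_1,…,p_n) be nonnegative reals with P_n = ∑_{i=1}^n p_i > 0, and let m = ⌊(1/P_n) ∑_{i=1}^n p_i · i⌋; assume m + 1 ≤ n. Define Φ(u,v) = (∑_{i=1}^n ((i−u)/(v−u)) p_i)·ψ(a_v) + (∑_{i=1}^n ((v−i)/(v−u)) p_i)·ψ(a_u) for integers u < v. Then Φ(m, m+1) ≤ ∑_{i=1}^n p_i ψ(a_i) ≤ Φ(1, n). -/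
/-- Hermite–Hadamard–Fejér type inequality for a convex finite sequence `a`,
composed with a non-decreasing convex function `ψ`, with general nonnegative
weights `p` (Niezgoda-type bounds `Φ(m, m+1) ≤ ∑ pᵢ ψ(aᵢ) ≤ Φ(1, n)`). -/
theorem stmt_17 (n : ℕ) (hn : 2 ≤ n) (I : Set ℝ) (hI : Convex ℝ I)
    (ψ : ℝ → ℝ) (hψmono : MonotoneOn ψ I) (hψconv : ConvexOn ℝ I ψ)
    (a p : ℕ → ℝ)
    (haI : ∀ i, 1 ≤ i → i ≤ n → a i ∈ I)
    (hconv : ∀ i, 2 ≤ i → i + 1 ≤ n → 2 * a i ≤ a (i - 1) + a (i + 1))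
    (hp : ∀ i, 0 ≤ p i) (hP : 0 < ∑ i ∈ Finset.Icc 1 n, p i)
    (m : ℕ)
    (hm : m = ⌊(∑ i ∈ Finset.Icc 1 n, p i * (i : ℝ)) / (∑ i ∈ Finset.Icc 1 n, p i)⌋₊)
    (hmn : m + 1 ≤ n)
    (Φ : ℕ → ℕ → ℝ)
    (hΦ : ∀ u v : ℕ, Φ u v =
      (∑ i ∈ Finset.Icc 1 n, (((i : ℝ) - (u : ℝ)) / ((v : ℝ) - (u : ℝ))) * p i) * ψ (a v) +
      (∑ i ∈ Finset.Icc 1 n, (((v : ℝ) - (i : ℝ)) / ((v : ℝ) - (u : ℝ))) * p i) * ψ (a u)) :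
    Φ m (m + 1) ≤ ∑ i ∈ Finset.Icc 1 n, p i * ψ (a i) ∧
      ∑ i ∈ Finset.Icc 1 n, p i * ψ (a i) ≤ Φ 1 n := by
  -- m ≥ 1
  have hmge1 : 1 ≤ m := by
    rw [hm]
    apply Nat.le_floor
    rw [Nat.cast_one, le_div_iff₀ hP, one_mul]
    apply Finset.sum_le_sum
    intro i hi
    simp only [Finset.mem_Icc] at hi
    have : (1:ℝ) ≤ (i:ℝ) := by exact_mod_cast hi.1
    nlinarith [hp i]
  -- the sequence ψ ∘ a is convex
  have hstep : ∀ j, 1 ≤ j → j + 2 ≤ n →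
      ψ (a (j+1)) - ψ (a j) ≤ ψ (a (j+2)) - ψ (a (j+1)) := by
    intro j hj hjn
    have h1 : 2 * a (j+1) ≤ a ((j+1) - 1) + a ((j+1) + 1) := hconv (j+1) (by omega) (by omega)
    have hsub : (j+1) - 1 = j := by omega
    rw [hsub] at h1
    have haj : a j ∈ I := haI j hj (by omega)
    have haj2 : a (j+2) ∈ I := haI (j+2) (by omega) hjn
    have haj1 : a (j+1) ∈ I := haI (j+1) (by omega) (by omega)
    have hmidI : (1/2 : ℝ) * a j + (1/2 : ℝ) * a (j+2) ∈ I := by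
      have := hI haj haj2 (by norm_num : (0:ℝ) ≤ 1/2) (by norm_num : (0:ℝ) ≤ 1/2)
        (by norm_num : (1/2 : ℝ) + 1/2 = 1)
      simpa [smul_eq_mul] using this
    have h2 : ψ (a (j+1)) ≤ ψ ((1/2:ℝ) * a j + (1/2:ℝ) * a (j+2)) :=
      hψmono haj1 hmidI (by linarith)
    have h3 : ψ ((1/2:ℝ) * a j + (1/2:ℝ) * a (j+2)) ≤
        (1/2:ℝ) * ψ (a j) + (1/2:ℝ) * ψ (a (j+2)) := by
      have := hψconv.2 haj haj2 (by norm_num : (0:ℝ) ≤ 1/2) (by norm_num : (0:ℝ) ≤ 1/2)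
        (by norm_num : (1/2 : ℝ) + 1/2 = 1)
      simpa [smul_eq_mul] using this
    linarith
  -- differences are monotone
  have hd : ∀ j k, 1 ≤ j → j ≤ k → k + 1 ≤ n →
      ψ (a (j+1)) - ψ (a j) ≤ ψ (a (k+1)) - ψ (a k) := by
    intro j k hj hjk
    induction k, hjk using Nat.le_induction with
    | base => intro _; exact le_rfl
    | succ k hk ih =>
      intro hkn
      have h1 := ih (by omega)
      have h2 := hstep k (by omega) (by omega)
      linarith
  -- tangent line at [t, t+1] lies below the sequence
  have hL : ∀ t, 1 ≤ t → t + 1 ≤ n → ∀ i, 1 ≤ i → i ≤ n →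
      ψ (a t) + ((i:ℝ) - t) * (ψ (a (t+1)) - ψ (a t)) ≤ ψ (a i) := by
    intro t ht htn
    have up : ∀ i, t ≤ i → i ≤ n →
        ψ (a t) + ((i:ℝ) - t) * (ψ (a (t+1)) - ψ (a t)) ≤ ψ (a i) := by
      intro i hti
      induction i, hti using Nat.le_induction with
      | base => intro _; simp
      | succ i hti ih =>
        intro hin
        have h1 := ih (by omega)
        have h2 := hd t i ht hti hin
        have hr : ((i+1:ℕ):ℝ) - (t:ℝ) = ((i:ℝ) - t) + 1 := by push_cast; ring
        rw [hr]
        nlinarith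
    have down : ∀ k i, 1 ≤ i → i ≤ t → t - i = k →
        ψ (a t) + ((i:ℝ) - t) * (ψ (a (t+1)) - ψ (a t)) ≤ ψ (a i) := by
      intro k
      induction k with
      | zero =>
        intro i hi1 hit hk
        have : i = t := by omega
        subst this
        simp
      | succ k ih =>
        intro i hi1 hit hk
        have h1 := ih (i+1) (by omega) (by omega) (by omega)
        have h2 := hd i t hi1 hit htn
        have hr : ((i+1:ℕ):ℝ) - (t:ℝ) = ((i:ℝ) - t) + 1 := by push_cast; ring
        rw [hr] at h1
        nlinarith
    intro i hi1 hin
    rcases le_or_gt i t with h | h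
    · exact down (t - i) i hi1 h rfl
    · exact up i (by omega) hin
  -- chord from 1 to n lies above the sequence
  have hup : ∀ i, 1 ≤ i → i ≤ n → ((n:ℝ) - 1) * ψ (a i) ≤
      ((i:ℝ) - 1) * ψ (a n) + ((n:ℝ) - (i:ℝ)) * ψ (a 1) := by
    intro i hi hin
    rcases eq_or_lt_of_le hi with h1 | h2
    · rw [← h1]
      push_cast
      ring_nf
      nlinarith [le_refl (ψ (a 1))]
    · have ht := hL (i - 1) (by omega) (by omega)
      have hii : i - 1 + 1 = i := by omega
      rw [hii] at ht
      have e1 := ht n (by omega) le_rfl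
      have e2 := ht 1 le_rfl (by omega)
      have hc : ((i - 1 : ℕ) : ℝ) = (i:ℝ) - 1 := by
        rw [Nat.cast_sub hi, Nat.cast_one]
      rw [hc] at e1 e2
      norm_num at e2
      have hu0 : (0:ℝ) ≤ (i:ℝ) - 1 := by
        have : (1:ℝ) ≤ (i:ℝ) := by exact_mod_cast hi
        linarith
      have hnu : (0:ℝ) ≤ (n:ℝ) - (i:ℝ) := by
        have : (i:ℝ) ≤ (n:ℝ) := by exact_mod_cast hin
        linarith
      nlinarith [mul_le_mul_of_nonneg_left e1 hu0, mul_le_mul_of_nonneg_left e2 hnu]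
  constructor
  · -- lower bound
    rw [hΦ, Finset.sum_mul, Finset.sum_mul, ← Finset.sum_add_distrib]
    apply Finset.sum_le_sum
    intro i hi
    simp only [Finset.mem_Icc] at hi
    have hLm := hL m hmge1 hmn i hi.1 hi.2
    have hpi := hp i
    have hc : ((m+1:ℕ):ℝ) = (m:ℝ) + 1 := by push_cast; ring
    rw [hc]
    have hden : ((m:ℝ) + 1) - (m:ℝ) = 1 := by ring
    rw [hden]
    simp only [div_one]
    nlinarith [mul_le_mul_of_nonneg_left hLm hpi]
  · -- upper bound
    rw [hΦ, Finset.sum_mul, Finset.sum_mul, ← Finset.sum_add_distrib]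
    apply Finset.sum_le_sum
    intro i hi
    simp only [Finset.mem_Icc] at hi
    have hpos : (0:ℝ) < (n:ℝ) - 1 := by
      have : (2:ℝ) ≤ (n:ℝ) := by exact_mod_cast hn
      linarith
    have h' : ψ (a i) ≤ (((i:ℝ) - 1) * ψ (a n) + ((n:ℝ) - (i:ℝ)) * ψ (a 1)) / ((n:ℝ) - 1) := by
      rw [le_div_iff₀ hpos]
      have := hup i hi.1 hi.2
      linarith [mul_comm (ψ (a i)) ((n:ℝ) - 1)]
    have hc1 : ((1:ℕ):ℝ) = (1:ℝ) := by norm_num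
    rw [hc1]
    have hgoal : (((i:ℝ) - 1) / ((n:ℝ) - 1)) * p i * ψ (a n) +
        (((n:ℝ) - (i:ℝ)) / ((n:ℝ) - 1)) * p i * ψ (a 1)
        = p i * ((((i:ℝ) - 1) * ψ (a n) + ((n:ℝ) - (i:ℝ)) * ψ (a 1)) / ((n:ℝ) - 1)) := by
      field_simp
    rw [hgoal]
    exact mul_le_mul_of_nonneg_left h' (hp i)
end

section
/- Let a = (a_i)_{i≥1} be a real sequence. Then a is convex if and only if for every n ≥ 2 and all vectors (p_1,…,p_n), (q_1,…,q_n) ∈ [1,+∞)^n with (p_1,…,p_n) majorized by (q_1,…,q_n), the inequality ∑_{i=1}^n (a_{⌊p_i⌋} − a_{⌊q_i⌋}) ≤ ∑_{i=1}^n ({q_i}·Δa_{⌊q_i⌋} − {p_i}·Δa_{⌊p_i⌋}) holds, where ⌊·⌋ is the floor function and {x} = x − ⌊x⌋ is the fractional part. -/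
/-- `x` is majorized by `y` (as vectors of length `n`, indexed by `0, …, n-1`):
the sums agree, and every partial sum of entries of `x` is dominated by a sum of
equally many entries of `y`.  This is equivalent to the classical definition via
decreasing rearrangements. -/
def MajorizedBy (n : ℕ) (x y : ℕ → ℝ) : Prop :=
  (∑ i ∈ Finset.range n, x i = ∑ i ∈ Finset.range n, y i) ∧
  ∀ A : Finset ℕ, A ⊆ Finset.range n →
    ∃ B : Finset ℕ, B ⊆ Finset.range n ∧ B.card = A.card ∧
      ∑ i ∈ A, x i ≤ ∑ i ∈ B, y i

/-- second difference -/
noncomputable def stmt18cc (a : ℕ → ℝ) (k : ℕ) : ℝ :=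
  (a (k + 1) - a k) - (a k - a (k - 1))

lemma stmt18_ident (a : ℕ → ℝ) (m : ℕ) (hm : 1 ≤ m) (t : ℝ) :
    a m + (t - m) * (a (m + 1) - a m)
      = a 1 + (t - 1) * (a 2 - a 1) + ∑ k ∈ Finset.Icc 2 m, stmt18cc a k * (t - k) := by
  induction m, hm using Nat.le_induction with
  | base => simp
  | succ m hm ih =>
    rw [Finset.sum_Icc_succ_top (by omega), ← add_assoc, ← ih]
    have h1 : (m + 1 : ℕ) - 1 = m := by omega
    simp only [stmt18cc, h1]
    push_cast
    ring

lemma stmt18_rep (a : ℕ → ℝ) (N : ℕ) (t : ℝ) (ht : 1 ≤ t) (hN : ⌊t⌋₊ ≤ N) :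
    a ⌊t⌋₊ + Int.fract t * (a (⌊t⌋₊ + 1) - a ⌊t⌋₊)
      = a 1 + (t - 1) * (a 2 - a 1) + ∑ k ∈ Finset.Icc 2 N, stmt18cc a k * max (t - k) 0 := by
  have ht0 : (0 : ℝ) ≤ t := le_trans zero_le_one ht
  set m := ⌊t⌋₊ with hm
  have hm1 : 1 ≤ m := Nat.le_floor (by exact_mod_cast ht)
  have hfr : Int.fract t = t - (m : ℝ) := by
    rw [Int.fract, ← natCast_floor_eq_intCast_floor ht0]
  have hmt : (m : ℝ) ≤ t := Nat.floor_le ht0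
  have hsum : ∑ k ∈ Finset.Icc 2 N, stmt18cc a k * max (t - k) 0
      = ∑ k ∈ Finset.Icc 2 m, stmt18cc a k * (t - k) := by
    rw [← Finset.sum_subset (Finset.Icc_subset_Icc_right hN)]
    · refine Finset.sum_congr rfl fun k hk => ?_
      have hkm : (k : ℝ) ≤ t := le_trans (by exact_mod_cast (Finset.mem_Icc.mp hk).2) hmt
      rw [max_eq_left (by linarith)]
    · intro k hkN hk
      have h2 : 2 ≤ k := (Finset.mem_Icc.mp hkN).1
      have hmk : m < k := by
        by_contra h
        exact hk (Finset.mem_Icc.mpr ⟨h2, by omega⟩)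
      have : t < (k : ℝ) := lt_of_lt_of_le (Nat.lt_floor_add_one t) (by exact_mod_cast hmk)
      rw [max_eq_right (by linarith), mul_zero]
  rw [hsum, hfr, stmt18_ident a m hm1 t]

lemma stmt18_summax (n : ℕ) (p q : ℕ → ℝ) (hmaj : MajorizedBy n p q) (c : ℝ) :
    ∑ i ∈ Finset.range n, max (p i - c) 0 ≤ ∑ i ∈ Finset.range n, max (q i - c) 0 := by
  classical
  set A := (Finset.range n).filter (fun i => c < p i) with hA
  obtain ⟨B, hBsub, hBcard, hBle⟩ := hmaj.2 A (Finset.filter_subset _ _)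
  have h1 : ∑ i ∈ Finset.range n, max (p i - c) 0 = ∑ i ∈ A, (p i - c) := by
    rw [hA, Finset.sum_filter]
    refine Finset.sum_congr rfl fun i _ => ?_
    split
    · exact max_eq_left (by linarith)
    · next hh => exact max_eq_right (by push_neg at hh; linarith)
  have h2 : ∑ i ∈ A, (p i - c) = ∑ i ∈ A, p i - A.card * c := by
    rw [Finset.sum_sub_distrib, Finset.sum_const, nsmul_eq_mul]
  have h3 : ∑ i ∈ B, (q i - c) = ∑ i ∈ B, q i - B.card * c := by
    rw [Finset.sum_sub_distrib, Finset.sum_const, nsmul_eq_mul]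
  calc ∑ i ∈ Finset.range n, max (p i - c) 0 = ∑ i ∈ A, (p i - c) := h1
    _ ≤ ∑ i ∈ B, (q i - c) := by rw [h2, h3, hBcard]; linarith
    _ ≤ ∑ i ∈ B, max (q i - c) 0 := Finset.sum_le_sum fun i _ => le_max_left _ _
    _ ≤ ∑ i ∈ Finset.range n, max (q i - c) 0 :=
        Finset.sum_le_sum_of_subset_of_nonneg hBsub fun i _ _ => le_max_right _ _

/-- A sequence `(a_i)_{i ≥ 1}` is convex iff the majorization inequality
`∑ (a_{⌊p_i⌋} - a_{⌊q_i⌋}) ≤ ∑ ({q_i} Δa_{⌊q_i⌋} - {p_i} Δa_{⌊p_i⌋})` holds for all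
`n ≥ 2` and all vectors `p ≺ q` with entries in `[1, ∞)`. -/
theorem stmt_18 (a : ℕ → ℝ) :
    (∀ i : ℕ, 1 ≤ i → a (i + 1) - a i ≤ a (i + 2) - a (i + 1)) ↔
    ∀ n : ℕ, 2 ≤ n → ∀ p q : ℕ → ℝ,
      (∀ i ∈ Finset.range n, (1 : ℝ) ≤ p i) →
      (∀ i ∈ Finset.range n, (1 : ℝ) ≤ q i) →
      MajorizedBy n p q →
      ∑ i ∈ Finset.range n, (a ⌊p i⌋₊ - a ⌊q i⌋₊) ≤
        ∑ i ∈ Finset.range n,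
          (Int.fract (q i) * (a (⌊q i⌋₊ + 1) - a ⌊q i⌋₊) -
            Int.fract (p i) * (a (⌊p i⌋₊ + 1) - a ⌊p i⌋₊)) := by
  classical
  constructor
  · intro hconv n hn p q hp hq hmaj
    set N := (Finset.range n).sup (fun i => max ⌊p i⌋₊ ⌊q i⌋₊) with hN
    have hNp : ∀ i ∈ Finset.range n, ⌊p i⌋₊ ≤ N := fun i hi =>
      le_trans (le_max_left _ _) (Finset.le_sup (f := fun i => max ⌊p i⌋₊ ⌊q i⌋₊) hi)
    have hNq : ∀ i ∈ Finset.range n, ⌊q i⌋₊ ≤ N := fun i hi =>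
      le_trans (le_max_right _ _) (Finset.le_sup (f := fun i => max ⌊p i⌋₊ ⌊q i⌋₊) hi)
    have key : ∑ i ∈ Finset.range n, (a ⌊p i⌋₊ + Int.fract (p i) * (a (⌊p i⌋₊ + 1) - a ⌊p i⌋₊))
        ≤ ∑ i ∈ Finset.range n, (a ⌊q i⌋₊ + Int.fract (q i) * (a (⌊q i⌋₊ + 1) - a ⌊q i⌋₊)) := by
      rw [Finset.sum_congr rfl (fun i hi => stmt18_rep a N (p i) (hp i hi) (hNp i hi)),
          Finset.sum_congr rfl (fun i hi => stmt18_rep a N (q i) (hq i hi) (hNq i hi))]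
      rw [Finset.sum_add_distrib, Finset.sum_add_distrib, Finset.sum_add_distrib,
          Finset.sum_add_distrib]
      have hlin : ∑ i ∈ Finset.range n, (p i - 1) * (a 2 - a 1)
          = ∑ i ∈ Finset.range n, (q i - 1) * (a 2 - a 1) := by
        rw [← Finset.sum_mul, ← Finset.sum_mul, Finset.sum_sub_distrib,
            Finset.sum_sub_distrib, hmaj.1]
      rw [hlin]
      have hmax : ∑ i ∈ Finset.range n, ∑ k ∈ Finset.Icc 2 N, stmt18cc a k * max (p i - k) 0
          ≤ ∑ i ∈ Finset.range n, ∑ k ∈ Finset.Icc 2 N, stmt18cc a k * max (q i - k) 0 := by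
        rw [Finset.sum_comm, Finset.sum_comm (s := Finset.range n)]
        refine Finset.sum_le_sum fun k hk => ?_
        obtain ⟨j, rfl⟩ : ∃ j, k = j + 2 := ⟨k - 2, by
          have := (Finset.mem_Icc.mp hk).1; omega⟩
        have hcc : 0 ≤ stmt18cc a (j + 2) := by
          have h1 : (j + 2 : ℕ) - 1 = j + 1 := by omega
          have := hconv (j + 1) (by omega)
          simp only [stmt18cc, h1]
          have h2 : j + 1 + 1 = j + 2 := by omega
          have h3 : j + 1 + 2 = j + 3 := by omega
          rw [h2, h3] at this
          linarith
        rw [← Finset.mul_sum, ← Finset.mul_sum]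
        exact mul_le_mul_of_nonneg_left (stmt18_summax n p q hmaj _) hcc
      linarith
    rw [Finset.sum_sub_distrib, Finset.sum_sub_distrib]
    rw [Finset.sum_add_distrib, Finset.sum_add_distrib] at key
    linarith
  · intro h i hi
    have key := h 2 le_rfl (fun _ => ((i + 1 : ℕ) : ℝ))
      (fun j => if j = 0 then ((i : ℕ) : ℝ) else ((i + 2 : ℕ) : ℝ))
      (fun j _ => Nat.one_le_cast.mpr (by omega))
      (fun j _ => by
        split
        · exact Nat.one_le_cast.mpr hi
        · exact Nat.one_le_cast.mpr (by omega))
      ?_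
    · rw [Finset.sum_range_succ, Finset.sum_range_one, Finset.sum_range_succ,
          Finset.sum_range_one] at key
      simp only [reduceIte] at key
      simp only [Nat.floor_natCast, Int.fract_natCast] at key
      norm_num at key
      rw [show ((i : ℝ) + 2) = ((i + 2 : ℕ) : ℝ) by push_cast; ring, Nat.floor_natCast] at key
      linarith
    · constructor
      · rw [Finset.sum_range_succ, Finset.sum_range_one, Finset.sum_range_succ,
            Finset.sum_range_one]
        norm_num
        ring
      · intro A hA
        by_cases hc : A.card = 1
        · refine ⟨{1}, by simp, by simp [hc], ?_⟩
          rw [Finset.sum_const, hc, one_smul, Finset.sum_singleton]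
          norm_num
        · have hcard : A.card = 0 ∨ A.card = 2 := by
            have h2 := Finset.card_le_card hA
            simp only [Finset.card_range] at h2
            omega
          rcases hcard with h0 | h2
          · exact ⟨A, hA, rfl, by rw [Finset.card_eq_zero.mp h0]; simp⟩
          · have hAe : A = Finset.range 2 := Finset.eq_of_subset_of_card_le hA (by simp [h2])
            refine ⟨A, hA, rfl, le_of_eq ?_⟩
            rw [hAe, Finset.sum_range_succ, Finset.sum_range_one, Finset.sum_range_succ,
                Finset.sum_range_one]
            norm_num
            ring
end

section
/- Let a = (a_i)_{i≥1} be a real sequence and t = (t_i)_{i≥1} an increasing real sequence, and let I_t = [t_1, sup_i t_i) (so that for each q ∈ I_t the index ⌊q⌋_t = max{ i : t_i ≤ q } is well defined; set {q}_t = q − t_{⌊q⌋_t}). Then a is convex with respect to t if and only if for every n ≥ 2 and all vectors (p_1,…,p_n), (q_1,…,q_n) ∈ I_t^n with (p_1,…,p_n) majorized by (q_1,…,q_n), the inequality ∑_{i=1}^n (a_{⌊p_i⌋_t} − a_{⌊q_i⌋_t}) ≤ ∑_{i=1}^n ( {q_i}_t · Δa_{⌊q_i⌋_t}/Δt_{⌊q_i⌋_t}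 − {p_i}_t · Δa_{⌊p_i⌋_t}/Δt_{⌊p_i⌋_t} ) holds. -/
open Finset



/-- `⌊q⌋_t`: the index of the largest term of `t` not greater than `q`. -/
noncomputable def tFloor (t : ℕ → ℝ) (q : ℝ) : ℕ := sSup {i : ℕ | t i ≤ q}




open Finset

noncomputable def slp (a t : ℕ → ℝ) (i : ℕ) : ℝ := (a (i + 1) - a i) / (t (i + 1) - t i)

lemma tFloor_spec {t : ℕ → ℝ} (ht : StrictMono t) {x : ℝ} (h0 : t 0 ≤ x) {j : ℕ}
    (hj : x < t j) : t (tFloor t x) ≤ x ∧ x < t (tFloor t x + 1) := by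
  have hbdd : BddAbove {i : ℕ | t i ≤ x} :=
    ⟨j, fun i hi => (ht.lt_iff_lt.mp (lt_of_le_of_lt hi hj)).le⟩
  have hne : {i : ℕ | t i ≤ x}.Nonempty := ⟨0, h0⟩
  have hmem : t (tFloor t x) ≤ x := Nat.sSup_mem hne hbdd
  refine ⟨hmem, ?_⟩
  by_contra h
  push_neg at h
  have h2 : tFloor t x + 1 ≤ tFloor t x := le_csSup hbdd h
  omega

lemma le_tFloor {t : ℕ → ℝ} {x : ℝ} {i j : ℕ} (ht : StrictMono t) (hi : t i ≤ x)
    (hj : x < t j) : i ≤ tFloor t x :=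
  le_csSup ⟨j, fun k hk => (ht.lt_iff_lt.mp (lt_of_le_of_lt hk hj)).le⟩ hi

lemma slp_mul {a t : ℕ → ℝ} (ht : StrictMono t) (i : ℕ) :
    slp a t i * (t (i + 1) - t i) = a (i + 1) - a i := by
  have h : t i < t (i + 1) := ht (Nat.lt_succ_self i)
  rw [slp, div_mul_cancel₀]
  linarith

lemma slp_step {a t : ℕ → ℝ} (ht : StrictMono t) (x : ℝ) (k : ℕ) :
    a (k + 1) + slp a t (k + 1) * (x - t (k + 1)) - (a k + slp a t k * (x - t k)) =
      (slp a t (k + 1) - slp a t k) * (x - t (k + 1)) := by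
  have h := slp_mul (a := a) ht k
  linear_combination -h

lemma support_line {a t : ℕ → ℝ} (ht : StrictMono t) (hs : Monotone (slp a t)) {x : ℝ}
    {j : ℕ} (h1 : t j ≤ x) (h2 : x < t (j + 1)) (k : ℕ) :
    a k + slp a t k * (x - t k) ≤ a j + slp a t j * (x - t j) := by
  set L : ℕ → ℝ := fun m => a m + slp a t m * (x - t m) with hL
  rcases le_or_gt k j with hk | hk
  · have g : Monotone (fun m => L (min m j)) := by
      apply monotone_nat_of_le_succ
      intro m
      rcases lt_or_ge m j with hm | hm
      · have hmin1 : min m j = m := min_eq_left hm.le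
        have hmin2 : min (m + 1) j = m + 1 := min_eq_left hm
        rw [hmin1, hmin2]
        have hstep := slp_step (a := a) ht x m
        have ht1 : t (m + 1) ≤ t j := ht.monotone hm
        have hss : slp a t m ≤ slp a t (m + 1) := hs (Nat.le_succ m)
        have : (0:ℝ) ≤ (slp a t (m + 1) - slp a t m) * (x - t (m + 1)) :=
          mul_nonneg (by linarith) (by linarith)
        simp only [hL]
        linarith [hstep]
      · rw [min_eq_right hm, min_eq_right (by omega : j ≤ m + 1)]
    have := g (show k ≤ j from hk)
    simpa [min_eq_left hk, min_self] using this
  · have g : Antitone (fun m => L (max m j)) := by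
      apply antitone_nat_of_succ_le
      intro m
      rcases lt_or_ge m j with hm | hm
      · rw [max_eq_right hm.le, max_eq_right (by omega : m + 1 ≤ j)]
      · rw [max_eq_left hm, max_eq_left (by omega : j ≤ m + 1)]
        have hstep := slp_step (a := a) ht x m
        have ht1 : t (j + 1) ≤ t (m + 1) := ht.monotone (by omega)
        have hss : slp a t m ≤ slp a t (m + 1) := hs (Nat.le_succ m)
        have : (slp a t (m + 1) - slp a t m) * (x - t (m + 1)) ≤ 0 :=
          mul_nonpos_of_nonneg_of_nonpos (by linarith) (by linarith)
        simp only [hL]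
        linarith [hstep]
    have := g (show j ≤ k from hk.le)
    simpa [max_eq_left hk.le, max_self] using this
open Finset

lemma abel_nonneg {n : ℕ} (d u : ℕ → ℝ) (hd : ∀ i, i + 1 < n → d i ≤ d (i + 1))
    (hU : ∀ k, k ≤ n → ∑ i ∈ range k, u i ≤ 0) (hn : ∑ i ∈ range n, u i = 0) :
    0 ≤ ∑ i ∈ range n, d i * u i := by
  have h := Finset.sum_range_by_parts d u n
  simp only [smul_eq_mul] at h
  rw [h, hn, mul_zero]
  have hterm : ∀ i ∈ range (n - 1), (0:ℝ) ≤ -((d (i + 1) - d i) * ∑ j ∈ range (i + 1), u j) := by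
    intro i hi
    rw [mem_range] at hi
    have h1 : d i ≤ d (i + 1) := hd i (by omega)
    have h2 : ∑ j ∈ range (i + 1), u j ≤ 0 := hU (i + 1) (by omega)
    nlinarith
  have := Finset.sum_nonneg hterm
  rw [Finset.sum_neg_distrib] at this
  linarith

lemma strictMono_fin_nat_le {k : ℕ} {f : Fin k → ℕ} (hf : StrictMono f) (i : Fin k) :
    (i : ℕ) ≤ f i := by
  obtain ⟨m, hm⟩ := i
  induction m with
  | zero => simp
  | succ m ih =>
    have hmk : m < k := by omega
    have h1 : m ≤ f ⟨m, hmk⟩ := by simpa using ih hmk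
    have h2 : f ⟨m, hmk⟩ < f ⟨m + 1, hm⟩ := hf (by simp [Fin.lt_def])
    simp only [Fin.val_mk]
    omega

lemma sorted_prefix_min {n k : ℕ} (Y : ℕ → ℝ) (hY : ∀ i j, i ≤ j → j < n → Y i ≤ Y j)
    {C : Finset ℕ} (hC : C ⊆ range n) (hk : C.card = k) :
    ∑ i ∈ range k, Y i ≤ ∑ i ∈ C, Y i := by
  have e := C.orderIsoOfFin hk
  have hmono : StrictMono (fun i : Fin k => ((e i : ℕ))) := by
    intro i j hij
    exact_mod_cast (e.lt_iff_lt.mpr hij)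
  have hsum : ∑ i ∈ C, Y i = ∑ i : Fin k, Y (e i) := by
    rw [← Finset.sum_coe_sort C Y]
    exact (Equiv.sum_comp e.toEquiv (fun x : {x // x ∈ C} => Y x)).symm
  rw [hsum, Finset.sum_range]
  apply Finset.sum_le_sum
  intro i _
  have h1 : (i : ℕ) ≤ (e i : ℕ) := strictMono_fin_nat_le hmono i
  have h2 : ((e i : ℕ)) < n := by
    have := hC (e i).2
    rwa [mem_range] at this
  exact hY i (e i) h1 h2
open Finset

def pnat {n : ℕ} (σ : Equiv.Perm (Fin n)) (i : ℕ) : ℕ :=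
  if h : i < n then (σ ⟨i, h⟩ : ℕ) else i

lemma pnat_lt {n : ℕ} (σ : Equiv.Perm (Fin n)) {i : ℕ} (h : i < n) : pnat σ i < n := by
  simp [pnat, h]

lemma pnat_pnat_inv {n : ℕ} (σ : Equiv.Perm (Fin n)) {i : ℕ} (h : i < n) :
    pnat σ (pnat σ⁻¹ i) = i := by
  simp [pnat, h, pnat_lt σ⁻¹ h]

lemma sum_pnat {n : ℕ} (σ : Equiv.Perm (Fin n)) (g : ℕ → ℝ) :
    ∑ i ∈ range n, g (pnat σ i) = ∑ i ∈ range n, g i := by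
  rw [Finset.sum_range, Finset.sum_range, ← Equiv.sum_comp σ (fun j : Fin n => g j)]
  apply Finset.sum_congr rfl
  intro i _
  simp [pnat, i.is_lt]

lemma sum_image_pnat {n : ℕ} (σ : Equiv.Perm (Fin n)) {S : Finset ℕ} (hS : S ⊆ range n)
    (g : ℕ → ℝ) : ∑ j ∈ S.image (pnat σ), g j = ∑ i ∈ S, g (pnat σ i) := by
  apply Finset.sum_image
  intro i hi j hj hij
  have hi' : i < n := mem_range.mp (hS hi)
  have hj' : j < n := mem_range.mp (hS hj)
  simp only [pnat, hi', hj', dif_pos] at hij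
  have : (⟨i, hi'⟩ : Fin n) = ⟨j, hj'⟩ := σ.injective (Fin.val_injective hij)
  simpa using this


noncomputable def Ff (a t : ℕ → ℝ) (v : ℝ) : ℝ :=
  a (tFloor t v) + (v - t (tFloor t v)) * slp a t (tFloor t v)

lemma pnat_injOn {n : ℕ} (σ : Equiv.Perm (Fin n)) {S : Finset ℕ} (hS : S ⊆ range n) :
    Set.InjOn (pnat σ) S := by
  intro i hi j hj hij
  have hi' : i < n := mem_range.mp (hS hi)
  have hj' : j < n := mem_range.mp (hS hj)
  simp only [pnat, hi', hj', dif_pos] at hij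
  have : (⟨i, hi'⟩ : Fin n) = ⟨j, hj'⟩ := σ.injective (Fin.val_injective hij)
  simpa using this

lemma forward (a t : ℕ → ℝ) (ht : StrictMono t) (hs : Monotone (slp a t)) (n : ℕ)
    (p q : ℕ → ℝ)
    (hp : ∀ i ∈ Finset.range n, t 0 ≤ p i ∧ ∃ j, p i < t j)
    (hq : ∀ i ∈ Finset.range n, t 0 ≤ q i ∧ ∃ j, q i < t j)
    (hmaj : MajorizedBy n p q) :
    ∑ i ∈ range n, Ff a t (p i) ≤ ∑ i ∈ range n, Ff a t (q i) := by
  classical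
  set P : Fin n → ℝ := fun i => p i with hP
  set Q : Fin n → ℝ := fun i => q i with hQ
  set σ := Tuple.sort P with hσ
  set τ := Tuple.sort Q with hτ
  set X : ℕ → ℝ := fun i => p (pnat σ i) with hX
  set Y : ℕ → ℝ := fun i => q (pnat τ i) with hY
  have hXmono : ∀ i j, i ≤ j → j < n → X i ≤ X j := by
    intro i j hij hjn
    have hin : i < n := lt_of_le_of_lt hij hjn
    have := Tuple.monotone_sort P (Fin.mk_le_mk.mpr hij : (⟨i, hin⟩ : Fin n) ≤ ⟨j, hjn⟩)
    simpa [hX, pnat, hin, hjn, hP] using this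
  have hYmono : ∀ i j, i ≤ j → j < n → Y i ≤ Y j := by
    intro i j hij hjn
    have hin : i < n := lt_of_le_of_lt hij hjn
    have := Tuple.monotone_sort Q (Fin.mk_le_mk.mpr hij : (⟨i, hin⟩ : Fin n) ≤ ⟨j, hjn⟩)
    simpa [hY, pnat, hin, hjn, hQ] using this
  have hXmem : ∀ i, i < n → t 0 ≤ X i ∧ ∃ j, X i < t j := fun i hi =>
    hp _ (mem_range.mpr (pnat_lt σ hi))
  have hYmem : ∀ i, i < n → t 0 ≤ Y i ∧ ∃ j, Y i < t j := fun i hi =>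
    hq _ (mem_range.mpr (pnat_lt τ hi))
  have htotX : ∑ i ∈ range n, X i = ∑ i ∈ range n, p i := sum_pnat σ p
  have htotY : ∑ i ∈ range n, Y i = ∑ i ∈ range n, q i := sum_pnat τ q
  have htot : ∑ i ∈ range n, X i = ∑ i ∈ range n, Y i := by
    rw [htotX, htotY]; exact hmaj.1
  have hkey : ∀ k, k ≤ n → ∑ i ∈ range k, Y i ≤ ∑ i ∈ range k, X i := by
    intro k hk
    have hIco : Ico k n ⊆ range n := by
      intro x hx; rw [mem_Ico] at hx; exact mem_range.mpr hx.2
    have hAsub : (Ico k n).image (pnat σ) ⊆ range n := by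
      intro x hx
      rw [mem_image] at hx
      obtain ⟨i, hi, rfl⟩ := hx
      exact mem_range.mpr (pnat_lt σ (mem_range.mp (hIco hi)))
    have hAcard : ((Ico k n).image (pnat σ)).card = n - k := by
      rw [Finset.card_image_of_injOn (pnat_injOn σ hIco), Nat.card_Ico]
    obtain ⟨B, hBsub, hBcard, hAB⟩ := hmaj.2 _ hAsub
    have hsumA : ∑ j ∈ (Ico k n).image (pnat σ), p j = ∑ i ∈ Ico k n, X i :=
      sum_image_pnat σ hIco p
    have hCsub : B.image (pnat τ⁻¹) ⊆ range n := by
      intro x hx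
      rw [mem_image] at hx
      obtain ⟨i, hi, rfl⟩ := hx
      exact mem_range.mpr (pnat_lt τ⁻¹ (mem_range.mp (hBsub hi)))
    have hCcard : (B.image (pnat τ⁻¹)).card = n - k := by
      rw [Finset.card_image_of_injOn (pnat_injOn τ⁻¹ hBsub), hBcard, hAcard]
    have hsumB : ∑ j ∈ B, q j = ∑ i ∈ B.image (pnat τ⁻¹), Y i := by
      rw [sum_image_pnat τ⁻¹ hBsub Y]
      apply Finset.sum_congr rfl
      intro j hj
      have hjn : j < n := mem_range.mp (hBsub hj)
      simp [hY, pnat_pnat_inv τ hjn]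
    have hDcard : (range n \ B.image (pnat τ⁻¹)).card = k := by
      rw [card_sdiff_of_subset hCsub, card_range, hCcard]; omega
    have hpref : ∑ i ∈ range k, Y i ≤ ∑ i ∈ range n \ B.image (pnat τ⁻¹), Y i :=
      sorted_prefix_min Y hYmono sdiff_subset hDcard
    have hsplitC : ∑ i ∈ range n \ B.image (pnat τ⁻¹), Y i + ∑ i ∈ B.image (pnat τ⁻¹), Y i
        = ∑ i ∈ range n, Y i := Finset.sum_sdiff hCsub
    have hsplitIcoY : ∑ i ∈ range k, Y i + ∑ i ∈ Ico k n, Y i = ∑ i ∈ range n, Y i := by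
      simp only [Finset.range_eq_Ico]; exact Finset.sum_Ico_consecutive _ (Nat.zero_le k) hk
    have hsplitIcoX : ∑ i ∈ range k, X i + ∑ i ∈ Ico k n, X i = ∑ i ∈ range n, X i := by
      simp only [Finset.range_eq_Ico]; exact Finset.sum_Ico_consecutive _ (Nat.zero_le k) hk
    linarith [hAB]
  -- final assembly
  rw [← sum_pnat σ (fun i => Ff a t (p i)), ← sum_pnat τ (fun i => Ff a t (q i))]
  have hsupp : ∀ i ∈ range n, Ff a t (X i) + slp a t (tFloor t (X i)) * (Y i - X i) ≤ Ff a t (Y i) := by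
    intro i hi
    rw [mem_range] at hi
    obtain ⟨hx0, jx, hjx⟩ := hXmem i hi
    obtain ⟨hy0, jy, hjy⟩ := hYmem i hi
    obtain ⟨hy1, hy2⟩ := tFloor_spec ht hy0 hjy
    have hsl := support_line ht hs hy1 hy2 (tFloor t (X i))
    have hx1 : t (tFloor t (X i)) ≤ X i := (tFloor_spec ht hx0 hjx).1
    simp only [Ff]
    linear_combination hsl
  have habel : 0 ≤ ∑ i ∈ range n, slp a t (tFloor t (X i)) * (Y i - X i) := by
    apply abel_nonneg
    · intro i hi
      obtain ⟨hx0, jx, hjx⟩ := hXmem i (by omega)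
      obtain ⟨hx0', jx', hjx'⟩ := hXmem (i + 1) (by omega)
      have h12 : X i ≤ X (i + 1) := hXmono i (i + 1) (by omega) (by omega)
      have hfl : tFloor t (X i) ≤ tFloor t (X (i + 1)) := by
        by_contra hcon
        push_neg at hcon
        have h1 : t (tFloor t (X i)) ≤ X i := (tFloor_spec ht hx0 hjx).1
        have h2 : X (i + 1) < t (tFloor t (X (i + 1)) + 1) := (tFloor_spec ht hx0' hjx').2
        have h3 : t (tFloor t (X (i + 1)) + 1) ≤ t (tFloor t (X i)) := ht.monotone (by omega)
        linarith
      exact hs hfl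
    · intro k hk
      have := hkey k hk
      rw [Finset.sum_sub_distrib]
      linarith
    · rw [Finset.sum_sub_distrib]
      linarith [htot]
  have hsum := Finset.sum_le_sum hsupp
  rw [Finset.sum_add_distrib] at hsum
  have : ∑ i ∈ range n, Ff a t (X i) ≤ ∑ i ∈ range n, Ff a t (Y i) := by linarith
  convert this using 2 <;> simp [hX, hY]

lemma tFloor_t {t : ℕ → ℝ} (ht : StrictMono t) (i : ℕ) : tFloor t (t i) = i := by
  have h1 := tFloor_spec ht (ht.monotone (Nat.zero_le i)) (ht (Nat.lt_succ_self i))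
  have h2 := le_tFloor ht (le_refl (t i)) (ht (Nat.lt_succ_self i))
  have h3 : tFloor t (t i) ≤ i := ht.le_iff_le.mp h1.1
  omega



/-- A sequence `a` is convex with respect to an increasing sequence `t` iff the
majorization inequality holds for all vectors `p ≺ q` with entries in
`I_t = [t_0, sup_i t_i)`. -/
theorem stmt_19 (a t : ℕ → ℝ) (ht : StrictMono t) :
    Monotone (fun i => (a (i + 1) - a i) / (t (i + 1) - t i)) ↔
    ∀ n : ℕ, 2 ≤ n → ∀ p q : ℕ → ℝ,
      (∀ i ∈ Finset.range n, t 0 ≤ p i ∧ ∃ j, p i < t j) →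
      (∀ i ∈ Finset.range n, t 0 ≤ q i ∧ ∃ j, q i < t j) →
      MajorizedBy n p q →
      ∑ i ∈ Finset.range n, (a (tFloor t (p i)) - a (tFloor t (q i))) ≤
        ∑ i ∈ Finset.range n,
          ((q i - t (tFloor t (q i))) *
              ((a (tFloor t (q i) + 1) - a (tFloor t (q i))) /
                (t (tFloor t (q i) + 1) - t (tFloor t (q i)))) -
            (p i - t (tFloor t (p i))) *
              ((a (tFloor t (p i) + 1) - a (tFloor t (p i))) /
                (t (tFloor t (p i) + 1) - t (tFloor t (p i))))) := by
  constructor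
  · intro hs n hn p q hp hq hmaj
    have hmain := forward a t ht hs n p q hp hq hmaj
    simp only [Ff, slp] at hmain
    rw [Finset.sum_sub_distrib, Finset.sum_sub_distrib]
    rw [Finset.sum_add_distrib, Finset.sum_add_distrib] at hmain
    linarith
  · intro H
    have hmono : ∀ i, slp a t i ≤ slp a t (i + 1) := by
      intro i
      set m : ℝ := (t i + t (i + 2)) / 2 with hm
      have hti2 : t i < t (i + 2) := ht (by omega)
      have hmlb : t i ≤ m := by rw [hm]; linarith
      have hmub : m < t (i + 2) := by rw [hm]; linarith
      set p : ℕ → ℝ := fun _ => m with hp_def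
      set q : ℕ → ℝ := fun j => if j = 0 then t i else t (i + 2) with hq_def
      have hp : ∀ k ∈ Finset.range 2, t 0 ≤ p k ∧ ∃ j, p k < t j := by
        intro k _
        exact ⟨le_trans (ht.monotone (Nat.zero_le i)) hmlb, ⟨i + 2, hmub⟩⟩
      have hq : ∀ k ∈ Finset.range 2, t 0 ≤ q k ∧ ∃ j, q k < t j := by
        intro k _
        rcases eq_or_ne k 0 with hk | hk
        · have hqk : q k = t i := by simp [hq_def, hk]
          rw [hqk]
          exact ⟨ht.monotone (Nat.zero_le i), ⟨i + 1, ht (Nat.lt_succ_self i)⟩⟩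
        · have hqk : q k = t (i + 2) := by simp [hq_def, hk]
          rw [hqk]
          exact ⟨ht.monotone (Nat.zero_le (i + 2)), ⟨i + 3, ht (Nat.lt_succ_self (i + 2))⟩⟩
      have hmaj : MajorizedBy 2 p q := by
        constructor
        · simp [hp_def, hq_def, Finset.sum_range_succ, hm]
          ring
        · intro A hA
          have hcard : A.card ≤ 2 := by
            have := Finset.card_le_card hA
            simpa using this
          have hsA : ∑ i ∈ A, p i = (A.card : ℝ) * m := by
            simp [hp_def, mul_comm]
          interval_cases h : A.card
          · exact ⟨∅, by simp, by simp, by simp [hsA]⟩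
          · refine ⟨{1}, by simp, by simp, ?_⟩
            rw [hsA]
            simp [hq_def]
            linarith
          · refine ⟨{0, 1}, by intro x hx; fin_cases hx <;> simp, by simp, ?_⟩
            rw [hsA]
            rw [Finset.sum_pair (by norm_num : (0:ℕ) ≠ 1)]
            have hq0 : q 0 = t i := by simp [hq_def]
            have hq1 : q 1 = t (i + 2) := by simp [hq_def]
            rw [hq0, hq1, hm]
            push_cast
            linarith
      have hineq := H 2 le_rfl p q hp hq hmaj
      obtain ⟨hj1, hj2⟩ := tFloor_spec ht (le_trans (ht.monotone (Nat.zero_le i)) hmlb) hmub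
      have hjge : i ≤ tFloor t m := le_tFloor ht hmlb hmub
      have hjle : tFloor t m ≤ i + 1 := by
        have h5 : t (tFloor t m) < t (i + 2) := lt_of_le_of_lt hj1 hmub
        have h6 := ht.lt_iff_lt.mp h5
        omega
      simp only [Finset.sum_range_succ, Finset.sum_range_zero] at hineq
      simp only [hp_def, hq_def] at hineq
      norm_num at hineq
      simp only [tFloor_t ht] at hineq
      have hd0 : (0:ℝ) < t (i + 1) - t i := by have := ht (Nat.lt_succ_self i); linarith
      have hd1 : (0:ℝ) < t (i + 2) - t (i + 1) := by
        have := ht (Nat.lt_succ_self (i + 1)); linarith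
      have hm0 := slp_mul (a := a) ht i
      have hm1 := slp_mul (a := a) ht (i + 1)
      simp only [slp] at hm0 hm1 ⊢
      have hcase : tFloor t m = i ∨ tFloor t m = i + 1 := by omega
      have e2 : i + 1 + 1 = i + 2 := rfl
      rw [e2] at hm1 ⊢
      rcases hcase with hj | hj <;> rw [hj] at hineq <;> rw [hm] at hineq <;>
        nlinarith [hineq, hm0, hm1, hd0, hd1]
    exact monotone_nat_of_le_succ hmono
end
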